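/- arXiv:2109.12566 — 6 statements merged into one kernel-verified Lean document; each statement's English description precedes it below -/
import Mathlib

section
/- Let n ≥ 1, let A be a real symmetric positive semidefinite (2n)×(2n) matrix, and let J be a real (2n)×(2n) matrix satisfying Jᵀ·J = I and J·J = −I. Then det(½(A + Jᵀ·A·J)) ≥ 2^{1−2n}·det(A). -/
open Matrix
open scoped MatrixOrder

/-- A real positive semidefinite matrix has nonnegative determinant. -/
lemma psd_det_nonneg {m : ℕ} {M : Matrix (Fin m) (Fin m) ℝ} (hM : M.PosSemidef) :
    0 ≤ M.det := by
  rw [hM.isHermitian.det_eq_prod_eigenvalues]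
  exact Finset.prod_nonneg fun i _ => hM.eigenvalues_nonneg i

/-- For a real PSD matrix `M` of size `m`, `2^m * √(det M) ≤ det (1 + M)`. -/
lemma det_one_add_psd {m : ℕ} {M : Matrix (Fin m) (Fin m) ℝ} (hM : M.PosSemidef) :
    (2 : ℝ) ^ m * Real.sqrt M.det ≤ (1 + M).det := by
  have hH := hM.isHermitian
  set U : Matrix (Fin m) (Fin m) ℝ := (hH.eigenvectorUnitary : Matrix (Fin m) (Fin m) ℝ)
    with hU
  have hUU : U * star U = 1 := (Matrix.mem_unitaryGroup_iff).mp hH.eigenvectorUnitary.2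
  have hspec : M = U * Matrix.diagonal (RCLike.ofReal ∘ hH.eigenvalues) * star U :=
    hH.spectral_theorem
  have hdiag : Matrix.diagonal (RCLike.ofReal ∘ hH.eigenvalues)
      = Matrix.diagonal (hH.eigenvalues) := rfl
  have h1M : 1 + M = U * (1 + Matrix.diagonal (hH.eigenvalues)) * star U := by
    rw [Matrix.mul_add, Matrix.add_mul, Matrix.mul_one, hUU]
    exact congrArg (HAdd.hAdd 1) hspec
  have hdet1M : (1 + M).det = ∏ i, (1 + hH.eigenvalues i) := by
    have e1 : (1 + M).det = (1 + Matrix.diagonal (hH.eigenvalues)).det := by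
      calc (1 + M).det = U.det * (1 + Matrix.diagonal (hH.eigenvalues)).det * (star U).det := by
            rw [h1M, Matrix.det_mul, Matrix.det_mul]
        _ = (1 + Matrix.diagonal (hH.eigenvalues)).det * (U.det * (star U).det) := by ring
        _ = (1 + Matrix.diagonal (hH.eigenvalues)).det := by
            rw [← Matrix.det_mul, hUU, Matrix.det_one, mul_one]
    rw [e1, ← Matrix.diagonal_one, Matrix.diagonal_add, Matrix.det_diagonal]
  have hdetM : M.det = ∏ i, hH.eigenvalues i := by
    rw [hH.det_eq_prod_eigenvalues]; norm_num
  have hnn : ∀ i, 0 ≤ hH.eigenvalues i := fun i => hM.eigenvalues_nonneg i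
  have hstep : ∀ i : Fin m, 2 * Real.sqrt (hH.eigenvalues i) ≤ 1 + hH.eigenvalues i := by
    intro i
    have h1 : Real.sqrt (hH.eigenvalues i) ^ 2 = hH.eigenvalues i := Real.sq_sqrt (hnn i)
    nlinarith [sq_nonneg (1 - Real.sqrt (hH.eigenvalues i))]
  have hP2 : (∏ i, Real.sqrt (hH.eigenvalues i)) ^ 2 = M.det := by
    rw [hdetM, ← Finset.prod_pow]
    exact Finset.prod_congr rfl fun i _ => Real.sq_sqrt (hnn i)
  have hprodsqrt : ∏ i, Real.sqrt (hH.eigenvalues i) = Real.sqrt M.det := by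
    rw [← hP2, Real.sqrt_sq (Finset.prod_nonneg fun i _ => Real.sqrt_nonneg _)]
  calc (2 : ℝ) ^ m * Real.sqrt M.det
      = ∏ i : Fin m, (2 * Real.sqrt (hH.eigenvalues i)) := by
        rw [Finset.prod_mul_distrib, Finset.prod_const, hprodsqrt]
        simp
    _ ≤ ∏ i, (1 + hH.eigenvalues i) := by
        apply Finset.prod_le_prod
        · intro i _; positivity
        · intro i _; exact hstep i
    _ = (1 + M).det := hdet1M.symm

/-- If `A` is a real symmetric positive semidefinite `(2n)×(2n)` matrix and `J` is a real
`(2n)×(2n)` matrix with `Jᵀ * J = 1` and `J * J = -1`, then the determinant of the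
`J`-invariant part `½(A + Jᵀ A J)` of `A` is at least `2^(1-2n) · det A`. -/
theorem stmt_0 (n : ℕ) (hn : 1 ≤ n)
    (A J : Matrix (Fin (2 * n)) (Fin (2 * n)) ℝ)
    (hAsymm : A.IsSymm) (hApsd : A.PosSemidef)
    (hJ1 : Jᵀ * J = 1) (hJ2 : J * J = -1) :
    (2 : ℝ) ^ ((1 : ℤ) - 2 * (n : ℤ)) * A.det ≤
      ((1 / 2 : ℝ) • (A + Jᵀ * A * J)).det := by
  set B := Jᵀ * A * J with hBdef
  have hBpsd : B.PosSemidef := by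
    have := hApsd.conjTranspose_mul_mul_same J
    rwa [Matrix.conjTranspose_eq_transpose_of_trivial] at this
  have hJdet : J.det * J.det = 1 := by
    have := congrArg Matrix.det hJ1
    rwa [Matrix.det_mul, Matrix.det_transpose, Matrix.det_one] at this
  have hdetB : B.det = A.det := by
    rw [hBdef, Matrix.det_mul, Matrix.det_mul, Matrix.det_transpose,
      mul_comm J.det A.det, mul_assoc, hJdet, mul_one]
  have hdetsmul : ((1 / 2 : ℝ) • (A + B)).det = (1 / 2 : ℝ) ^ (2 * n) * (A + B).det := by
    rw [Matrix.det_smul]; simp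
  have hAdet : 0 ≤ A.det := psd_det_nonneg hApsd
  rcases eq_or_lt_of_le hAdet with h0 | hpos
  · -- det A = 0
    rw [hdetsmul, ← h0, mul_zero]
    have : 0 ≤ (A + B).det := psd_det_nonneg (hApsd.add hBpsd)
    positivity
  · -- det A > 0
    set C := CFC.sqrt A with hCdef
    have hCpsd : C.PosSemidef := (CFC.sqrt_nonneg A).posSemidef
    have hCC : C * C = A := CFC.sqrt_mul_sqrt_self A hApsd.nonneg
    have hCdet : C.det * C.det = A.det := by rw [← Matrix.det_mul, hCC]
    have hCdet_pos : 0 < C.det := by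
      rcases lt_trichotomy C.det 0 with h | h | h
      · exact absurd (psd_det_nonneg hCpsd) (not_le.mpr h)
      · rw [h, mul_zero] at hCdet; exact absurd hCdet.symm (ne_of_gt hpos)
      · exact h
    have hCunit : IsUnit C.det := isUnit_iff_ne_zero.mpr (ne_of_gt hCdet_pos)
    have hCinv_herm : (C⁻¹)ᴴ = C⁻¹ := by
      rw [Matrix.conjTranspose_eq_transpose_of_trivial, Matrix.transpose_nonsing_inv]
      congr 1
      rw [← Matrix.conjTranspose_eq_transpose_of_trivial]
      exact hCpsd.isHermitian
    set M := C⁻¹ * B * C⁻¹ with hMdef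
    have hMpsd : M.PosSemidef := by
      have := hBpsd.conjTranspose_mul_mul_same (C⁻¹)
      rwa [hCinv_herm] at this
    have hCinvC : C⁻¹ * C = 1 := Matrix.nonsing_inv_mul C hCunit
    have hCCinv : C * C⁻¹ = 1 := Matrix.mul_nonsing_inv C hCunit
    have hAB : A + B = C * (1 + M) * C := by
      rw [hMdef, Matrix.mul_add, Matrix.mul_one, Matrix.add_mul, hCC]
      congr 1
      symm
      calc C * (C⁻¹ * B * C⁻¹) * C = (C * C⁻¹) * B * (C⁻¹ * C) := by
            simp only [Matrix.mul_assoc]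
        _ = B := by rw [hCCinv, hCinvC, Matrix.one_mul, Matrix.mul_one]
    have hdetAB : (A + B).det = A.det * (1 + M).det := by
      rw [hAB, Matrix.det_mul, Matrix.det_mul]
      rw [← hCdet]
      ring
    have hdetM : M.det = 1 := by
      have hCinvdet : (C⁻¹).det = (C.det)⁻¹ := by
        rw [Matrix.det_nonsing_inv, Ring.inverse_eq_inv']
      rw [hMdef, Matrix.det_mul, Matrix.det_mul, hCinvdet, hdetB]
      field_simp
      nlinarith [hCdet]
    have hkey : (2 : ℝ) ^ (2 * n) ≤ (1 + M).det := by
      have := det_one_add_psd hMpsd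
      rwa [hdetM, Real.sqrt_one, mul_one] at this
    -- conclude
    rw [hdetsmul, hdetAB]
    have h1 : (2 : ℝ) ^ ((1 : ℤ) - 2 * (n : ℤ)) ≤ 1 := by
      apply zpow_le_one_of_nonpos₀ (by norm_num)
      omega
    have h2 : (2 : ℝ) ^ ((1 : ℤ) - 2 * (n : ℤ)) * A.det ≤ A.det := by
      have h0 : (0 : ℝ) < (2 : ℝ) ^ ((1 : ℤ) - 2 * (n : ℤ)) := by positivity
      nlinarith
    have h3 : A.det ≤ (1 / 2 : ℝ) ^ (2 * n) * (A.det * (1 + M).det) := by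
      have hp : (0 : ℝ) < (2 : ℝ) ^ (2 * n) := by positivity
      have e : (1 / 2 : ℝ) ^ (2 * n) * (A.det * (1 + M).det)
          = A.det * ((1 + M).det / 2 ^ (2 * n)) := by
        rw [div_pow, one_pow]; ring
      rw [e]
      have hq : (1 : ℝ) ≤ (1 + M).det / 2 ^ (2 * n) := (one_le_div hp).mpr hkey
      nlinarith
    linarith
end

section
/- Let n ≥ 1 and let Γ ⊆ ℝⁿ be a nonempty open convex cone with vertex at the origin (i.e. tμ ∈ Γ for all μ ∈ Γ, t > 0) that is invariant under permutations of the coordinates, contains the positive orthant Γₙ = {μ ∈ ℝⁿ : μᵢ > 0 for all i}, and satisfies Γ ≠ ℝⁿ. Then Γ ⊆ Γ₁ := {μ ∈ ℝⁿ : μ₁ + μ₂ + ⋯ + μₙ > 0}; that is, every μ ∈ Γ has positive coordinate sum. -/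
/-- A nonempty open convex symmetric cone `Γ ⊊ ℝⁿ` containing the positive orthant is
contained in `Γ₁ = {μ : μ₁ + ⋯ + μₙ > 0}`. -/
theorem stmt_1 (n : ℕ) (hn : 1 ≤ n) (Γ : Set (Fin n → ℝ))
    (hne : Γ.Nonempty) (hopen : IsOpen Γ) (hconv : Convex ℝ Γ)
    (hcone : ∀ μ ∈ Γ, ∀ t : ℝ, 0 < t → t • μ ∈ Γ)
    (hperm : ∀ μ ∈ Γ, ∀ σ : Equiv.Perm (Fin n), μ ∘ σ ∈ Γ)
    (horthant : {μ : Fin n → ℝ | ∀ i, 0 < μ i} ⊆ Γ)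
    (hproper : Γ ≠ Set.univ) :
    ∀ μ ∈ Γ, 0 < ∑ i, μ i := by
  haveI : NeZero n := ⟨by omega⟩
  intro μ hμ
  by_contra hs
  push_neg at hs
  -- Γ is closed under addition
  have hadd : ∀ a ∈ Γ, ∀ b ∈ Γ, a + b ∈ Γ := by
    intro a ha b hb
    have h2 := hcone _ (hconv ha hb (by norm_num : (0:ℝ) ≤ 1/2)
      (by norm_num : (0:ℝ) ≤ 1/2) (by norm_num)) 2 (by norm_num)
    simpa [smul_smul, smul_add] using h2
  -- average over cyclic shifts: constant vector (∑ μ i)/n lies in Γ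
  have hnpos : (0:ℝ) < n := by positivity
  have hav : (∑ k : Fin n, ((n:ℝ)⁻¹) • (μ ∘ (Equiv.addRight k))) ∈ Γ := by
    apply hconv.sum_mem
    · intro k _; positivity
    · simp [Finset.sum_const, Finset.card_univ]
    · intro k _; exact hperm μ hμ _
  have hconst : (fun _ : Fin n => (∑ i, μ i) / n) ∈ Γ := by
    convert hav using 1
    funext i
    simp only [Finset.sum_apply, Pi.smul_apply, Function.comp_apply, Equiv.coe_addRight,
      smul_eq_mul]
    rw [← Finset.mul_sum]
    rw [div_eq_inv_mul]
    congr 1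
    exact (Fintype.sum_equiv (Equiv.addLeft i) _ _ (fun k => by
      simp [Equiv.coe_addLeft, add_comm])).symm
  -- get a strictly negative constant vector in Γ
  have hcont : Continuous (fun c : ℝ => (fun _ : Fin n => c)) :=
    continuous_pi fun _ => continuous_id
  have hpre : IsOpen ((fun c : ℝ => (fun _ : Fin n => c)) ⁻¹' Γ) := hopen.preimage hcont
  obtain ⟨ε, hε, hball⟩ := Metric.isOpen_iff.mp hpre ((∑ i, μ i) / n) hconst
  set c : ℝ := (∑ i, μ i) / n - ε / 2 with hc
  have hcΓ : (fun _ : Fin n => c) ∈ Γ := by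
    apply hball
    simp [hc, Real.dist_eq]
    rw [abs_of_pos hε]
    linarith
  have hcneg : c < 0 := by
    have : (∑ i, μ i) / n ≤ 0 := div_nonpos_of_nonpos_of_nonneg hs (le_of_lt hnpos)
    simp [hc]; linarith
  -- now Γ = univ
  apply hproper
  ext x
  simp only [Set.mem_univ, iff_true]
  set t : ℝ := ‖x‖ + 1 with ht
  have hxpos : (x + fun _ => t) ∈ Γ := by
    apply horthant
    intro i
    have h1 : |x i| ≤ ‖x‖ := by
      have := norm_le_pi_norm x i
      simpa [Real.norm_eq_abs] using this
    have := abs_le.mp h1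
    simp [ht]
    linarith [this.1]
  have hneg : ((fun _ : Fin n => -t) : Fin n → ℝ) ∈ Γ := by
    have htpos : (0:ℝ) < t := by positivity
    have hc0 : c ≠ 0 := ne_of_lt hcneg
    have hscale := hcone _ hcΓ (t / (-c)) (div_pos htpos (by linarith))
    convert hscale using 1
    funext i
    simp only [Pi.smul_apply, smul_eq_mul]
    rw [div_mul_eq_mul_div, div_neg, mul_div_cancel_right₀ t hc0]
  have := hadd _ hxpos _ hneg
  convert this using 1
  funext i
  simp
end

section
/- Let Γ ⊆ ℝⁿ be an open convex set invariant under permutations of the coordinates, and let f : Γ → ℝ be differentiable, concave, and symmetric (f(μ_{π(1)},…,μ_{π(n)}) = f(μ₁,…,μₙ) for every permutation π). If μ ∈ Γ and μᵢ ≥ μⱼ for indices i, j, then ∂f/∂μᵢ(μ) ≤ ∂f/∂μⱼ(μ). In particular, if μ₁ ≥ μ₂ ≥ ⋯ ≥ μₙ then ∂f/∂μ₁(μ) ≤ ∂f/∂μ₂(μ) ≤ ⋯ ≤ ∂f/∂μₙ(μ). -/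
/-- For a differentiable concave symmetric function `f` on an open convex
permutation-invariant set `Γ ⊆ ℝⁿ`, if `μ ∈ Γ` and `μᵢ ≥ μⱼ`, then
`∂f/∂μᵢ(μ) ≤ ∂f/∂μⱼ(μ)`. -/
theorem stmt_2 (n : ℕ) (Γ : Set (Fin n → ℝ)) (hopen : IsOpen Γ) (hconv : Convex ℝ Γ)
    (hperm : ∀ μ ∈ Γ, ∀ σ : Equiv.Perm (Fin n), μ ∘ σ ∈ Γ)
    (f : (Fin n → ℝ) → ℝ)
    (hdiff : ∀ μ ∈ Γ, DifferentiableAt ℝ f μ)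
    (hconc : ConcaveOn ℝ Γ f)
    (hsymm : ∀ μ ∈ Γ, ∀ σ : Equiv.Perm (Fin n), f (μ ∘ σ) = f μ)
    (μ : Fin n → ℝ) (hμ : μ ∈ Γ) (i j : Fin n) (hij : μ j ≤ μ i) :
    fderiv ℝ f μ (Pi.single i 1) ≤ fderiv ℝ f μ (Pi.single j 1) := by
  set D := fderiv ℝ f μ with hD
  set σ : Equiv.Perm (Fin n) := Equiv.swap i j with hσ
  rcases eq_or_lt_of_le hij with heq | hlt
  · -- equal coordinates: the swap fixes μ, symmetry gives equality of derivatives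
    have hμσ : μ ∘ σ = μ := by
      funext k
      simp only [hσ, Function.comp_apply, Equiv.swap_apply_def]
      split_ifs with h1 h2
      · rw [h1]; exact heq
      · rw [h2]; exact heq.symm
      · rfl
    set L : (Fin n → ℝ) →L[ℝ] (Fin n → ℝ) :=
      ContinuousLinearMap.pi (fun k => ContinuousLinearMap.proj (σ k)) with hL
    have hLapp : ∀ x : Fin n → ℝ, L x = x ∘ σ := fun x => rfl
    have hLμ : L μ = μ := by rw [hLapp, hμσ]
    have hfL : (f ∘ L) =ᶠ[nhds μ] f := by
      filter_upwards [hopen.mem_nhds hμ] with x hx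
      show f (L x) = f x
      rw [hLapp]; exact hsymm x hx σ
    have h1 : fderiv ℝ (f ∘ L) μ = D := hfL.fderiv_eq
    have hfd : HasFDerivAt f D (L μ) := by rw [hLμ]; exact (hdiff μ hμ).hasFDerivAt
    have h2 : HasFDerivAt (f ∘ L) (D.comp L) μ := hfd.comp μ L.hasFDerivAt
    have h3 : D.comp L = D := by rw [← h2.fderiv, h1]
    have hei : L (Pi.single i 1) = Pi.single j 1 := by
      rw [hLapp]
      funext k
      simp only [Function.comp_apply, Pi.single_apply, hσ, Equiv.swap_apply_def]
      split_ifs <;> simp_all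
    have := congrArg (fun T : (Fin n → ℝ) →L[ℝ] ℝ => T (Pi.single i 1)) h3
    simp only [ContinuousLinearMap.comp_apply, hei] at this
    exact le_of_eq this.symm
  · -- strict case: use concavity along the segment from μ to μ ∘ σ
    have hne : i ≠ j := fun h => absurd (h ▸ rfl) hlt.ne
    set ν : Fin n → ℝ := μ ∘ σ with hν
    have hνΓ : ν ∈ Γ := hperm μ hμ σ
    set v : Fin n → ℝ := ν - μ with hv
    have hμ0 : μ + (0 : ℝ) • v = μ := by simp
    have hfd : HasFDerivAt f D (μ + (0 : ℝ) • v) := by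
      rw [hμ0]; exact (hdiff μ hμ).hasFDerivAt
    have hline : HasDerivAt (fun t : ℝ => μ + t • v) v 0 := by
      simpa using ((hasDerivAt_id (0 : ℝ)).smul_const v).const_add μ
    have hg : HasDerivAt (fun t : ℝ => f (μ + t • v)) (D v) 0 := by
      have := hfd.comp_hasDerivAt 0 hline
      exact this
    have hfν : f ν = f μ := hsymm μ hμ σ
    -- g t ≥ g 0 for t ∈ [0,1]
    have hgl : ∀ t : ℝ, t ∈ Set.Icc (0:ℝ) 1 → f μ ≤ f (μ + t • v) := by
      intro t ht
      have h1t : (0:ℝ) ≤ 1 - t := by linarith [ht.2]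
      have hcomb := hconc.2 hμ hνΓ h1t ht.1 (by ring)
      have hpt : (1 - t) • μ + t • ν = μ + t • v := by
        funext k
        simp only [Pi.add_apply, Pi.smul_apply, Pi.sub_apply, smul_eq_mul, hv]
        ring
      rw [hpt, hfν] at hcomb
      calc f μ = (1 - t) * f μ + t * f μ := by ring
        _ ≤ f (μ + t • v) := hcomb
    have key : 0 ≤ D v := by
      have hslope : Filter.Tendsto (slope (fun t : ℝ => f (μ + t • v)) 0)
          (nhdsWithin 0 {(0:ℝ)}ᶜ) (nhds (D v)) := hasDerivAt_iff_tendsto_slope.mp hg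
      have hmono : nhdsWithin (0:ℝ) (Set.Ioi 0) ≤ nhdsWithin 0 {(0:ℝ)}ᶜ :=
        nhdsWithin_mono _ (fun t ht => ne_of_gt ht)
      have hslope' := hslope.mono_left hmono
      refine ge_of_tendsto hslope' ?_
      filter_upwards [Ioc_mem_nhdsGT_of_mem (Set.mem_Ico.mpr ⟨le_refl 0, zero_lt_one⟩)]
        with t ht
      have htpos : 0 < t := ht.1
      have hge := hgl t ⟨le_of_lt htpos, ht.2⟩
      have : slope (fun t : ℝ => f (μ + t • v)) 0 t
          = (f (μ + t • v) - f (μ + (0:ℝ) • v)) / t := by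
        simp [slope_def_field, div_eq_inv_mul]
      rw [this, hμ0]
      exact div_nonneg (by linarith) (le_of_lt htpos)
    -- compute v
    have hveq : v = (μ i - μ j) • (Pi.single j 1 : Fin n → ℝ) - (μ i - μ j) • (Pi.single i 1 : Fin n → ℝ) := by
      funext k
      simp only [hv, hν, Pi.sub_apply, Pi.smul_apply, Function.comp_apply, smul_eq_mul,
        Pi.single_apply, hσ, Equiv.swap_apply_def]
      split_ifs <;> simp_all
    rw [hveq, map_sub, map_smul, map_smul, smul_eq_mul, smul_eq_mul, sub_nonneg] at key
    have hc : 0 < μ i - μ j := by linarith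
    exact (mul_le_mul_iff_right₀ hc).mp key
end

section
/- Let A₀ be a real symmetric m×m matrix whose largest eigenvalue λ₁ is simple (has multiplicity one), and let v ∈ ℝᵐ be a unit eigenvector of A₀ for λ₁. Then the largest-eigenvalue function λ_max, defined on the real vector space of real symmetric m×m matrices, is Fréchet differentiable at A₀ with derivative B ↦ vᵀ·B·v. -/
open Matrix

/-- The largest eigenvalue of a real symmetric matrix (junk value `0` if the matrix is
not symmetric). -/
noncomputable def lambdaMax {m : ℕ} (A : Matrix (Fin m) (Fin m) ℝ) : ℝ :=
  if h : A.IsHermitian then ⨆ i, h.eigenvalues i else 0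

attribute [local instance] Matrix.normedAddCommGroup

section Aux

open RealInnerProductSpace

lemma aux_inner_eq_dot {m : ℕ} (x y : EuclideanSpace ℝ (Fin m)) :
    ⟪x, y⟫ = (x : Fin m → ℝ) ⬝ᵥ (y : Fin m → ℝ) := by
  rw [EuclideanSpace.inner_eq_star_dotProduct, dotProduct_comm]; rfl

lemma aux_expand {m : ℕ} {A : Matrix (Fin m) (Fin m) ℝ} (hA : A.IsHermitian) (x : Fin m → ℝ) :
    x ⬝ᵥ A *ᵥ x = ∑ i, hA.eigenvalues i * ((hA.eigenvectorBasis i : Fin m → ℝ) ⬝ᵥ x)^2 := by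
  have hsymm : Aᵀ = A := by rw [← Matrix.conjTranspose_eq_transpose_of_trivial]; exact hA
  have key := hA.eigenvectorBasis.sum_inner_mul_inner (WithLp.toLp 2 x) (WithLp.toLp 2 (A *ᵥ x))
  simp only [aux_inner_eq_dot, WithLp.ofLp_toLp] at key
  rw [← key]
  congr 1; ext i
  have h0 : A *ᵥ (hA.eigenvectorBasis i : Fin m → ℝ)
      = hA.eigenvalues i • (hA.eigenvectorBasis i : Fin m → ℝ) := hA.mulVec_eigenvectorBasis i
  have h1 : (hA.eigenvectorBasis i : Fin m → ℝ) ⬝ᵥ A *ᵥ x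
      = hA.eigenvalues i * ((hA.eigenvectorBasis i : Fin m → ℝ) ⬝ᵥ x) := by
    rw [dotProduct_mulVec, ← mulVec_transpose, hsymm, h0, smul_dotProduct, smul_eq_mul]
  rw [h1, sq, dotProduct_comm (x : Fin m → ℝ)]
  ring

lemma aux_parseval {m : ℕ} {A : Matrix (Fin m) (Fin m) ℝ} (hA : A.IsHermitian) (x : Fin m → ℝ) :
    x ⬝ᵥ x = ∑ i, ((hA.eigenvectorBasis i : Fin m → ℝ) ⬝ᵥ x)^2 := by
  have key := hA.eigenvectorBasis.sum_inner_mul_inner (WithLp.toLp 2 x) (WithLp.toLp 2 x)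
  simp only [aux_inner_eq_dot, WithLp.ofLp_toLp] at key
  rw [← key]
  congr 1; ext i
  rw [sq, dotProduct_comm (x : Fin m → ℝ)]

lemma aux_basis_dot {m : ℕ} {A : Matrix (Fin m) (Fin m) ℝ} (hA : A.IsHermitian) (i j : Fin m) :
    (hA.eigenvectorBasis i : Fin m → ℝ) ⬝ᵥ (hA.eigenvectorBasis j : Fin m → ℝ)
      = if i = j then 1 else 0 := by
  rw [← aux_inner_eq_dot]
  exact orthonormal_iff_ite.mp hA.eigenvectorBasis.orthonormal i j

lemma aux_lambdaMax_eq {m : ℕ} {A : Matrix (Fin m) (Fin m) ℝ} (hA : A.IsHermitian) :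
    lambdaMax A = ⨆ i, hA.eigenvalues i := by
  rw [lambdaMax, dif_pos hA]

lemma aux_eigenvalue_le {m : ℕ} {A : Matrix (Fin m) (Fin m) ℝ} (hA : A.IsHermitian)
    (i : Fin m) : hA.eigenvalues i ≤ lambdaMax A := by
  rw [aux_lambdaMax_eq hA]
  exact le_ciSup (Set.Finite.bddAbove (Set.finite_range _)) i

lemma aux_lambdaMax_attained {m : ℕ} (hm : 0 < m) {A : Matrix (Fin m) (Fin m) ℝ}
    (hA : A.IsHermitian) : ∃ i, lambdaMax A = hA.eigenvalues i := by
  haveI : Nonempty (Fin m) := ⟨⟨0, hm⟩⟩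
  obtain ⟨i₀, hi₀⟩ := Finite.exists_max hA.eigenvalues
  exact ⟨i₀, le_antisymm (by rw [aux_lambdaMax_eq hA]; exact ciSup_le hi₀)
    (aux_eigenvalue_le hA i₀)⟩

lemma aux_rayleigh {m : ℕ} (hm : 0 < m) {A : Matrix (Fin m) (Fin m) ℝ}
    (hA : A.IsHermitian) (x : Fin m → ℝ) :
    x ⬝ᵥ A *ᵥ x ≤ lambdaMax A * (x ⬝ᵥ x) := by
  rw [aux_expand hA x, aux_parseval hA x, Finset.mul_sum]
  exact Finset.sum_le_sum fun i _ =>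
    mul_le_mul_of_nonneg_right (aux_eigenvalue_le hA i) (sq_nonneg _)

lemma aux_dot_self_nonneg {m : ℕ} (x : Fin m → ℝ) : 0 ≤ x ⬝ᵥ x :=
  Finset.sum_nonneg fun i _ => mul_self_nonneg _

lemma aux_dot_bound {m : ℕ} (B : Matrix (Fin m) (Fin m) ℝ) (x y : Fin m → ℝ) :
    |x ⬝ᵥ B *ᵥ y| ≤ (∑ i, |x i|) * (∑ j, |y j|) * ‖B‖ := by
  have hB : ∀ i j, |B i j| ≤ ‖B‖ := fun i j => B.norm_entry_le_entrywise_sup_norm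
  calc |x ⬝ᵥ B *ᵥ y| = |∑ i, ∑ j, x i * (B i j * y j)| := by
        simp [dotProduct, mulVec, Finset.mul_sum]
    _ ≤ ∑ i, ∑ j, |x i * (B i j * y j)| :=
        (Finset.abs_sum_le_sum_abs _ _).trans
          (Finset.sum_le_sum fun i _ => Finset.abs_sum_le_sum_abs _ _)
    _ ≤ ∑ i, ∑ j, |x i| * (‖B‖ * |y j|) := by
        refine Finset.sum_le_sum fun i _ => Finset.sum_le_sum fun j _ => ?_
        rw [abs_mul, abs_mul]
        exact mul_le_mul_of_nonneg_left
          (mul_le_mul_of_nonneg_right (hB i j) (abs_nonneg _)) (abs_nonneg _)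
    _ = (∑ i, |x i|) * (∑ j, |y j|) * ‖B‖ := by
        simp only [← Finset.mul_sum, ← Finset.sum_mul]
        ring

lemma aux_sum_abs_sq_le {m : ℕ} (x : Fin m → ℝ) :
    (∑ i, |x i|) ^ 2 ≤ (m : ℝ) * (x ⬝ᵥ x) := by
  have h := sq_sum_le_card_mul_sum_sq (s := Finset.univ) (f := fun i : Fin m => |x i|)
  simp only [sq_abs, Finset.card_univ, Fintype.card_fin] at h
  calc (∑ i, |x i|) ^ 2 ≤ (m : ℝ) * ∑ i, x i ^ 2 := h
    _ = (m : ℝ) * (x ⬝ᵥ x) := by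
        congr 1; simp [dotProduct, sq]

end Aux

set_option maxHeartbeats 1000000 in
/-- If the largest eigenvalue `λ₁` of a real symmetric matrix `A₀` is simple, with unit
eigenvector `v`, then `λ_max` is Fréchet differentiable at `A₀` on the space of real
symmetric matrices, with derivative `B ↦ vᵀ B v`. -/
theorem stmt_5 (m : ℕ) (A₀ : Matrix (Fin m) (Fin m) ℝ) (hA₀ : A₀.IsSymm)
    (v : Fin m → ℝ) (hv : v ⬝ᵥ v = 1)
    (hev : A₀.mulVec v = lambdaMax A₀ • v)
    (hsimple : ∀ w : Fin m → ℝ, A₀.mulVec w = lambdaMax A₀ • w → ∃ c : ℝ, w = c • v) :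
    ∀ ε > 0, ∃ δ > 0, ∀ B : Matrix (Fin m) (Fin m) ℝ, B.IsSymm → ‖B‖ < δ →
      |lambdaMax (A₀ + B) - lambdaMax A₀ - v ⬝ᵥ B.mulVec v| ≤ ε * ‖B‖ := by
  intro ε hε
  rcases Nat.eq_zero_or_pos m with hm | hm
  · exfalso; subst hm; simp [dotProduct] at hv
  haveI : Nonempty (Fin m) := ⟨⟨0, hm⟩⟩
  have hA : A₀.IsHermitian := by
    rw [Matrix.IsHermitian, Matrix.conjTranspose_eq_transpose_of_trivial]; exact hA₀
  -- eigenbasis of A₀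
  have e : Fin m → Fin m → ℝ := fun i => (hA.eigenvectorBasis i : Fin m → ℝ)
  obtain ⟨i₀, hi₀⟩ := aux_lambdaMax_attained hm hA
  have hvec0 : A₀ *ᵥ (hA.eigenvectorBasis i₀ : Fin m → ℝ)
      = lambdaMax A₀ • (hA.eigenvectorBasis i₀ : Fin m → ℝ) := by
    rw [hi₀]
    exact hA.mulVec_eigenvectorBasis i₀
  obtain ⟨c, hc⟩ := hsimple _ hvec0
  have hee : ∀ i j, (hA.eigenvectorBasis i : Fin m → ℝ) ⬝ᵥ (hA.eigenvectorBasis j : Fin m → ℝ)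
      = if i = j then 1 else 0 := fun i j => aux_basis_dot hA i j
  have hc0 : c ≠ 0 := by
    intro h
    have h1 := hee i₀ i₀
    rw [hc, h, zero_smul] at h1
    simpa using h1
  -- strict gap for other eigenvalues
  have hlt : ∀ j, j ≠ i₀ → hA.eigenvalues j < lambdaMax A₀ := by
    intro j hj
    rcases lt_or_eq_of_le (aux_eigenvalue_le hA j) with h | h
    · exact h
    · exfalso
      have hvecj : A₀ *ᵥ (hA.eigenvectorBasis j : Fin m → ℝ)
          = lambdaMax A₀ • (hA.eigenvectorBasis j : Fin m → ℝ) := by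
        rw [← h]
        exact hA.mulVec_eigenvectorBasis j
      obtain ⟨c', hc'⟩ := hsimple _ hvecj
      have hc'0 : c' ≠ 0 := by
        intro h'
        have h1 := hee j j
        rw [hc', h', zero_smul] at h1
        simpa using h1
      have h2 := hee j i₀
      rw [hc', hc, if_neg hj] at h2
      simp only [smul_dotProduct, dotProduct_smul, smul_eq_mul, hv] at h2
      exact mul_ne_zero hc0 hc'0 (by linear_combination h2)
  -- spectral gap
  set g : ℝ := Finset.univ.inf' Finset.univ_nonempty
      (fun i => if i = i₀ then 1 else lambdaMax A₀ - hA.eigenvalues i) with hg_def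
  have hg0 : 0 < g := by
    rw [hg_def, Finset.lt_inf'_iff]
    intro i _
    by_cases hi : i = i₀
    · rw [if_pos hi]; norm_num
    · rw [if_neg hi]; linarith only [hlt i hi]
  have hgle : ∀ i, i ≠ i₀ → hA.eigenvalues i ≤ lambdaMax A₀ - g := by
    intro i hi
    have := Finset.inf'_le (fun j => if j = i₀ then 1 else lambdaMax A₀ - hA.eigenvalues j)
      (Finset.mem_univ i)
    rw [if_neg hi] at this
    rw [← hg_def] at this
    linarith only [this]
  -- gap inequality for vectors orthogonal to v
  have hgap : ∀ u : Fin m → ℝ, v ⬝ᵥ u = 0 → u ⬝ᵥ A₀ *ᵥ u ≤ (lambdaMax A₀ - g) * (u ⬝ᵥ u) := by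
    intro u hu
    rw [aux_expand hA u, aux_parseval hA u, Finset.mul_sum]
    refine Finset.sum_le_sum fun i _ => ?_
    by_cases hi : i = i₀
    · have h0 : (hA.eigenvectorBasis i : Fin m → ℝ) ⬝ᵥ u = 0 := by
        rw [hi, hc, smul_dotProduct, smul_eq_mul, hu, mul_zero]
      rw [h0]
      simp
    · exact mul_le_mul_of_nonneg_right (hgle i hi) (sq_nonneg _)
  -- choose δ
  have hM1 : (1 : ℝ) ≤ (m : ℝ) := by exact_mod_cast hm
  have hM0 : (0 : ℝ) < (m : ℝ) := by linarith only [hM1]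
  set s : ℝ := ε / (2 * m) with hs_def
  have hs0 : 0 < s := by positivity
  refine ⟨g / (2 * m + 2 * m ^ 2 / ε), by positivity, ?_⟩
  intro B hB hBlt
  set β := ‖B‖ with hβ_def
  have hβ0 : 0 ≤ β := norm_nonneg B
  set D := A₀ + B with hD_def
  have hDsymm : D.IsSymm := by
    rw [Matrix.IsSymm, hD_def, Matrix.transpose_add, hA₀.eq, hB.eq]
  have hD : D.IsHermitian := by
    rw [Matrix.IsHermitian, Matrix.conjTranspose_eq_transpose_of_trivial]; exact hDsymm
  -- top eigenvector of D
  obtain ⟨i₁, hi₁⟩ := aux_lambdaMax_attained hm hD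
  set w : Fin m → ℝ := (hD.eigenvectorBasis i₁ : Fin m → ℝ) with hw_def
  have hw1 : w ⬝ᵥ w = 1 := by
    have := aux_basis_dot hD i₁ i₁
    rw [if_pos rfl] at this
    exact this
  have hwD : lambdaMax D = w ⬝ᵥ D *ᵥ w := by
    have h0 : D *ᵥ w = hD.eigenvalues i₁ • w := hD.mulVec_eigenvectorBasis i₁
    rw [h0, dotProduct_smul, smul_eq_mul, hw1, mul_one, hi₁]
  -- decomposition
  set α : ℝ := v ⬝ᵥ w with hα_def
  set u : Fin m → ℝ := w - α • v with hu_def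
  have hw : w = α • v + u := by rw [hu_def]; abel
  have hu0 : v ⬝ᵥ u = 0 := by
    rw [hu_def, dotProduct_sub, dotProduct_smul, smul_eq_mul, hv, mul_one, hα_def, sub_self]
  have hu0' : u ⬝ᵥ v = 0 := by rw [dotProduct_comm]; exact hu0
  set T : ℝ := u ⬝ᵥ u with hT_def
  have hT0 : 0 ≤ T := aux_dot_self_nonneg u
  have halpha : α ^ 2 + T = 1 := by
    have hwex : w ⬝ᵥ w = α^2*(v ⬝ᵥ v) + α*(v ⬝ᵥ u) + α*(u ⬝ᵥ v) + u ⬝ᵥ u := by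
      rw [hw]
      simp only [add_dotProduct, dotProduct_add, smul_dotProduct, dotProduct_smul, smul_eq_mul]
      ring
    rw [hw1, hv, hu0, hu0'] at hwex
    rw [hT_def]; linarith only [hwex]
  have hT1 : T ≤ 1 := by linarith only [halpha, sq_nonneg α]
  have hα1 : α ^ 2 ≤ 1 := by linarith only [halpha, hT0]
  -- cross terms with A₀
  have hvAv : v ⬝ᵥ A₀ *ᵥ v = lambdaMax A₀ := by
    rw [hev]
    rw [dotProduct_smul, smul_eq_mul, hv, mul_one]
  have hvAu : v ⬝ᵥ A₀ *ᵥ u = 0 := by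
    rw [dotProduct_mulVec, ← mulVec_transpose, hA₀.eq, hev, smul_dotProduct, smul_eq_mul,
      hu0, mul_zero]
  have huAv : u ⬝ᵥ A₀ *ᵥ v = 0 := by
    rw [hev, dotProduct_smul, smul_eq_mul, hu0', mul_zero]
  -- symmetry of B cross terms
  have hBsym : u ⬝ᵥ B *ᵥ v = v ⬝ᵥ B *ᵥ u := by
    rw [dotProduct_mulVec, ← mulVec_transpose, hB.eq, dotProduct_comm]
  -- bilinear expansion
  have bil : ∀ M : Matrix (Fin m) (Fin m) ℝ, w ⬝ᵥ M *ᵥ w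
      = α^2*(v ⬝ᵥ M *ᵥ v) + α*(v ⬝ᵥ M *ᵥ u) + α*(u ⬝ᵥ M *ᵥ v) + u ⬝ᵥ M *ᵥ u := by
    intro M
    rw [hw]
    simp only [add_dotProduct, dotProduct_add, smul_dotProduct, dotProduct_smul, smul_eq_mul,
      mulVec_add, mulVec_smul]
    ring
  -- quadratics
  set qvv : ℝ := v ⬝ᵥ B *ᵥ v with hqvv_def
  set qvu : ℝ := v ⬝ᵥ B *ᵥ u with hqvu_def
  set quu : ℝ := u ⬝ᵥ B *ᵥ u with hquu_def
  set Pv : ℝ := ∑ i, |v i| with hPv_def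
  set Pu : ℝ := ∑ i, |u i| with hPu_def
  have hPv0 : 0 ≤ Pv := Finset.sum_nonneg fun i _ => abs_nonneg _
  have hPu0 : 0 ≤ Pu := Finset.sum_nonneg fun i _ => abs_nonneg _
  have hPv2 : Pv ^ 2 ≤ (m : ℝ) := by
    have := aux_sum_abs_sq_le v
    rw [hv, mul_one] at this
    exact this
  have hPu2 : Pu ^ 2 ≤ (m : ℝ) * T := aux_sum_abs_sq_le u
  have b1 : |qvv| ≤ Pv * Pv * β := aux_dot_bound B v v
  have b2 : |quu| ≤ Pu * Pu * β := aux_dot_bound B u u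
  have b3 : |qvu| ≤ Pv * Pu * β := aux_dot_bound B v u
  -- the value of lambdaMax D
  have hupper : lambdaMax D = (1 - T) * lambdaMax A₀ + (u ⬝ᵥ A₀ *ᵥ u)
      + (1 - T) * qvv + 2*α*qvu + quu := by
    have h1 : w ⬝ᵥ D *ᵥ w = w ⬝ᵥ A₀ *ᵥ w + w ⬝ᵥ B *ᵥ w := by
      rw [hD_def, Matrix.add_mulVec, dotProduct_add]
    rw [hwD, h1, bil A₀, bil B, hvAv, hvAu, huAv, hBsym]
    have hα2 : α ^ 2 = 1 - T := by linarith only [halpha]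
    rw [← hqvv_def, ← hqvu_def, ← hquu_def, hα2]
    ring
  have hgapu : u ⬝ᵥ A₀ *ᵥ u ≤ (lambdaMax A₀ - g) * T := by
    rw [hT_def]; exact hgap u hu0
  -- lower bound
  have hlower : lambdaMax A₀ + qvv ≤ lambdaMax D := by
    have h1 : v ⬝ᵥ D *ᵥ v = lambdaMax A₀ + qvv := by
      rw [hD_def, Matrix.add_mulVec, dotProduct_add, hvAv]
    have h2 := aux_rayleigh hm hD v
    rw [hv, mul_one, h1] at h2
    exact h2
  -- abs bound pieces
  have habs_a : |α| ≤ 1 :=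
    abs_le.mpr ⟨by linarith only [sq_nonneg (α + 1), hα1], by linarith only [sq_nonneg (α - 1), hα1]⟩
  have p2 : 2*α*qvu ≤ 2 * (Pv * Pu * β) := by
    calc 2*α*qvu ≤ |2*α*qvu| := le_abs_self _
      _ = 2 * |α| * |qvu| := by rw [abs_mul, abs_mul]; norm_num
      _ ≤ 2 * 1 * (Pv * Pu * β) :=
          mul_le_mul (by linarith only [habs_a]) b3 (abs_nonneg _) (by norm_num)
      _ = 2 * (Pv * Pu * β) := by ring
  have p1 : -(T * qvv) ≤ T * (Pv * Pv * β) := by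
    have h1 : -qvv ≤ Pv * Pv * β := by
      linarith only [neg_abs_le qvv, b1]
    have h2 := mul_le_mul_of_nonneg_left h1 hT0
    linarith only [h2]
  have p3 : quu ≤ Pu * Pu * β := le_trans (le_abs_self _) b2
  -- AM-GM for cross term
  have amgm : 2 * (Pv * Pu) ≤ s * Pv^2 + Pu^2 / s := by
    have key : s * Pv ^ 2 + Pu ^ 2 / s - 2 * (Pv * Pu)
        = (s * Pv - Pu)^2 / s := by field_simp; ring
    have h2 : 0 ≤ (s * Pv - Pu)^2 / s := by positivity
    linarith only [key, h2]
  -- the smallness condition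
  have hsmall : 2 * m * β + (m : ℝ) * β / s ≤ g := by
    have hfac : (0:ℝ) < 2 * m + 2 * m ^ 2 / ε := by positivity
    have h1 : β * (2 * m + 2 * m ^ 2 / ε) < g := by
      calc β * (2 * m + 2 * m ^ 2 / ε) < g / (2 * m + 2 * m ^ 2 / ε) * (2 * m + 2 * m ^ 2 / ε) :=
            mul_lt_mul_of_pos_right hBlt hfac
        _ = g := by field_simp
    have h2 : (m:ℝ) * β / s = 2 * m ^ 2 * β / ε := by
      rw [hs_def]; field_simp
    rw [h2]
    have h3 : β * (2 * m + 2 * m ^ 2 / ε) = 2 * m * β + 2 * m ^ 2 * β / ε := by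
      field_simp
    linarith only [h1, h3]
  -- final estimate
  have hX0 : 0 ≤ lambdaMax D - lambdaMax A₀ - qvv := by linarith only [hlower]
  have hXle : lambdaMax D - lambdaMax A₀ - qvv ≤ ε * β := by
    have step : lambdaMax D - lambdaMax A₀ - qvv ≤ -(g*T) - T*qvv + 2*α*qvu + quu := by
      rw [hupper]; linarith only [hgapu]
    have hPvm : Pv * Pv ≤ (m : ℝ) := by rw [← pow_two]; exact hPv2
    have hPum : Pu * Pu ≤ (m : ℝ) * T := by rw [← pow_two]; exact hPu2
    have t1 : T * (Pv * Pv * β) ≤ T * ((m:ℝ) * β) :=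
      mul_le_mul_of_nonneg_left (mul_le_mul_of_nonneg_right hPvm hβ0) hT0
    have t2 : 2 * (Pv * Pu * β) ≤ (s * (m:ℝ) + (m:ℝ) * T / s) * β := by
      have h1 : s * Pv^2 ≤ s * (m:ℝ) := mul_le_mul_of_nonneg_left hPv2 hs0.le
      have h2 : Pu^2 / s ≤ (m:ℝ) * T / s := (div_le_div_iff_of_pos_right hs0).mpr hPu2
      have inner : 2 * (Pv * Pu) ≤ s * (m:ℝ) + (m:ℝ) * T / s := by linarith only [amgm, h1, h2]
      have h4 := mul_le_mul_of_nonneg_right inner hβ0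
      linarith only [h4]
    have t3 : Pu * Pu * β ≤ (m:ℝ) * T * β := mul_le_mul_of_nonneg_right hPum hβ0
    have comb : lambdaMax D - lambdaMax A₀ - qvv
        ≤ T * (-g + 2*(m:ℝ)*β + (m:ℝ)*β/s) + s*(m:ℝ)*β := by
      have hqs : ((m:ℝ) * T / s) * β = T * ((m:ℝ) * β / s) := by
        field_simp
      linarith only [step, p1, p2, p3, t1, t2, t3, hqs]
    have hTneg : T * (-g + 2*(m:ℝ)*β + (m:ℝ)*β/s) ≤ 0 := by
      apply mul_nonpos_of_nonneg_of_nonpos hT0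
      linarith only [hsmall]
    have hsm : s * (m:ℝ) * β = ε * β / 2 := by
      rw [hs_def]; field_simp
    have hεβ : 0 ≤ ε * β := mul_nonneg hε.le hβ0
    linarith only [comb, hTneg, hsm, hεβ]
  rw [abs_of_nonneg hX0]
  exact hXle
end

section
/- Let 1 ≤ k ≤ n and let Γ_k = {μ ∈ ℝⁿ : σ_j(μ) > 0 for j = 1,…,k} be the k-th Gårding cone, where σ_j is the j-th elementary symmetric polynomial. Then Γ_k is an open convex cone with vertex at the origin, invariant under permutations of the coordinates, and satisfies Γₙ ⊆ Γ_k ⊆ Γ₁, where Γₙ = {μ ∈ ℝⁿ : μᵢ > 0 for all i} is the positive orthant and Γ₁ = {μ ∈ ℝⁿ : μ₁ + ⋯ + μₙ > 0}. -/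
set_option maxHeartbeats 1000000

/-- The `j`-th elementary symmetric polynomial on `ℝⁿ`. -/
def esymm (n j : ℕ) (μ : Fin n → ℝ) : ℝ :=
  ∑ s ∈ Finset.powersetCard j Finset.univ, ∏ i ∈ s, μ i

/-- The `k`-th Gårding cone `Γ_k = {μ ∈ ℝⁿ : σ_j(μ) > 0 for j = 1,…,k}`. -/
def GardingCone (n k : ℕ) : Set (Fin n → ℝ) :=
  {μ | ∀ j, 1 ≤ j → j ≤ k → 0 < esymm n j μ}

noncomputable section
open Polynomial

/-- Elementary symmetric function over a general commutative ring. -/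
def gsymm (R : Type*) [CommRing R] (n j : ℕ) (z : Fin n → R) : R :=
  ∑ s ∈ Finset.powersetCard j Finset.univ, ∏ i ∈ s, z i

lemma esymm_eq_gsymm (n j : ℕ) (μ : Fin n → ℝ) : esymm n j μ = gsymm ℝ n j μ := rfl

variable {R : Type*} [CommRing R]

lemma gsymm_map {S : Type*} [CommRing S] (φ : R →+* S) (n j : ℕ) (z : Fin n → R) :
    φ (gsymm R n j z) = gsymm S n j (fun i => φ (z i)) := by
  simp [gsymm, map_sum, map_prod]

lemma gsymm_smul (n j : ℕ) (c : R) (z : Fin n → R) :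
    gsymm R n j (c • z) = c ^ j * gsymm R n j z := by
  rw [gsymm, gsymm, Finset.mul_sum]
  refine Finset.sum_congr rfl fun s hs => ?_
  rw [Finset.mem_powersetCard] at hs
  rw [← hs.2, ← Finset.prod_const, ← Finset.prod_mul_distrib]
  exact Finset.prod_congr rfl fun i _ => rfl

lemma gsymm_zero (n : ℕ) (z : Fin n → R) : gsymm R n 0 z = 1 := by
  simp [gsymm]

lemma gsymm_one (n j : ℕ) : gsymm R n j (fun _ => (1 : R)) = (n.choose j : R) := by
  simp [gsymm, Finset.card_powersetCard]

lemma gsymm_continuous {R : Type*} [CommRing R] [TopologicalSpace R] [IsTopologicalRing R]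
    (n j : ℕ) : Continuous (gsymm R n j) := by
  apply continuous_finset_sum
  intro s _
  exact continuous_finset_prod _ fun i _ => continuous_apply i

/-- The polynomial `∏ (X + z i)`. -/
def Qpol {n : ℕ} (z : Fin n → R) : R[X] := ∏ i, (X + C (z i))

lemma Qpol_monic [Nontrivial R] {n : ℕ} (z : Fin n → R) : (Qpol z).Monic :=
  monic_prod_of_monic _ _ fun i _ => monic_X_add_C _

lemma Qpol_natDegree [Nontrivial R] {n : ℕ} (z : Fin n → R) : (Qpol z).natDegree = n := by
  rw [Qpol, natDegree_prod_of_monic _ _ fun i _ => monic_X_add_C _]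
  simp [natDegree_X_add_C]

lemma Qpol_coeff {n j : ℕ} (hj : j ≤ n) (z : Fin n → R) :
    (Qpol z).coeff (n - j) = gsymm R n j z := by
  rw [Qpol, Finset.prod_X_add_C_coeff _ _ (by simp [Nat.sub_le])]
  simp only [gsymm, Finset.card_univ, Fintype.card_fin, Nat.sub_sub_self hj]

lemma Qpol_shift {n : ℕ} (z : Fin n → R) (t : R) :
    Qpol (z + t • (1 : Fin n → R)) = (Qpol z).comp (X + C t) := by
  rw [Qpol, Qpol, prod_comp]
  refine Finset.prod_congr rfl fun i _ => ?_
  simp only [Pi.add_apply, Pi.smul_apply, Pi.one_apply, smul_eq_mul, mul_one, add_comp, X_comp,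
    C_comp, C_add]
  ring

lemma gsymm_shift {n j : ℕ} (hj : j ≤ n) (z : Fin n → R) (t : R) :
    gsymm R n j (z + t • 1) = (hasseDeriv (n - j) (Qpol z)).eval t := by
  rw [← Qpol_coeff hj, Qpol_shift, ← taylor_apply, taylor_coeff]

lemma hasse_Qpol_coeff {n j d : ℕ} (hd : d ≤ j) (hj : j ≤ n) (z : Fin n → R) :
    (hasseDeriv (n - j) (Qpol z)).coeff d
      = ((d + (n - j)).choose (n - j) : R) * gsymm R n (j - d) z := by
  rw [hasseDeriv_coeff]
  congr 1
  have h : d + (n - j) = n - (j - d) := by omega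
  rw [h, Qpol_coeff (by omega)]

lemma hasse_Qpol_natDegree {R : Type*} [CommRing R] [Nontrivial R] [IsAddTorsionFree R]
    {n j : ℕ} (hj : j ≤ n) (z : Fin n → R) :
    (hasseDeriv (n - j) (Qpol z)).natDegree = j := by
  rw [natDegree_hasseDeriv, Qpol_natDegree]
  omega

lemma splits_derivative {p : ℝ[X]} (hp : p.Splits) :
    (derivative p).Splits := by
  by_cases hd : derivative p = 0
  · rw [hd]; exact Splits.zero
  by_cases h0 : p.natDegree = 0
  · exact absurd (by rw [eq_C_of_natDegree_eq_zero h0]; simp) hd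
  rw [splits_iff_card_roots] at hp ⊢
  have h1 := p.card_roots_le_derivative
  have h2 := (derivative p).card_roots'
  have h3 := natDegree_derivative_le p
  omega

lemma splits_iterate_derivative {p : ℝ[X]} (m : ℕ) (hp : p.Splits) :
    (derivative^[m] p).Splits := by
  induction m with
  | zero => exact hp
  | succ m ih => rw [Function.iterate_succ_apply']; exact splits_derivative ih

lemma splits_hasseDeriv {p : ℝ[X]} (m : ℕ) (hp : p.Splits) :
    (hasseDeriv m p).Splits := by
  have h : (m.factorial : ℝ) • hasseDeriv m p = derivative^[m] p := by
    have h1 := congrFun (factorial_smul_hasseDeriv (R := ℝ) m) p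
    simpa [Nat.cast_smul_eq_nsmul] using h1
  have hfac : (m.factorial : ℝ) ≠ 0 := by positivity
  have h2 : hasseDeriv m p = C (m.factorial : ℝ)⁻¹ * derivative^[m] p := by
    rw [← h]; rw [smul_eq_C_mul, ← mul_assoc, ← C_mul, inv_mul_cancel₀ hfac, C_1, one_mul]
  rw [h2]
  exact (Splits.C _).mul (splits_iterate_derivative m hp)

lemma Qpol_splits {n : ℕ} (z : Fin n → ℝ) : (Qpol z).Splits :=
  Splits.prod fun i _ => Splits.of_natDegree_le_one (natDegree_X_add_C _).le

/-- A real polynomial that splits over ℝ has no nonreal complex roots. -/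
lemma splits_eval_ne_zero {p : ℝ[X]} (hp : p.Splits) (hp0 : p ≠ 0)
    {z : ℂ} (hz : z.im ≠ 0) : (p.map (algebraMap ℝ ℂ)).eval z ≠ 0 := by
  rw [hp.eq_prod_roots, Polynomial.map_mul, map_C, eval_mul, eval_C,
    Polynomial.map_multiset_prod, Multiset.map_map, eval_multiset_prod, Multiset.map_map]
  apply mul_ne_zero
  · simp only [Complex.coe_algebraMap, ne_eq, Complex.ofReal_eq_zero]
    exact leadingCoeff_ne_zero.mpr hp0
  · apply Multiset.prod_ne_zero
    rw [Multiset.mem_map]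
    rintro ⟨r, hr, h⟩
    apply hz
    simp only [Function.comp_apply, Polynomial.map_sub, map_C, map_X, eval_sub, eval_X, eval_C,
      sub_eq_zero] at h
    rw [h]
    simp

/-- Complex roots of a split real polynomial are real roots. -/
lemma splits_root_real {p : ℝ[X]} (hp : p.Splits) (hp0 : p ≠ 0)
    {z : ℂ} (hz : (p.map (algebraMap ℝ ℂ)).eval z = 0) :
    z.im = 0 ∧ p.eval z.re = 0 := by
  have him : z.im = 0 := by
    by_contra h
    exact splits_eval_ne_zero hp hp0 h hz
  refine ⟨him, ?_⟩
  have hz' : z = ((z.re : ℝ) : ℂ) := by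
    apply Complex.ext <;> simp [him]
  rw [hz', Polynomial.eval_map,
    show ((z.re : ℝ) : ℂ) = algebraMap ℝ ℂ z.re from rfl, Polynomial.eval₂_at_apply] at hz
  rw [Complex.coe_algebraMap, Complex.ofReal_eq_zero] at hz
  exact hz

----------------- Batch 2 -----------------

/-- If the elementary symmetric functions up to `j` are positive, the shifted hasse-derivative
polynomial has positive values for `t ≥ 0`. -/
lemma hasse_eval_pos {n j : ℕ} (hj : j ≤ n) (lam : Fin n → ℝ)
    (hlam : ∀ i, 1 ≤ i → i ≤ j → 0 < esymm n i lam) {t : ℝ} (ht : 0 ≤ t) :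
    0 < (hasseDeriv (n - j) (Qpol lam)).eval t := by
  have hdeg : (hasseDeriv (n - j) (Qpol lam)).natDegree = j := hasse_Qpol_natDegree hj lam
  have hcoeff : ∀ d, d ≤ j → 0 < (hasseDeriv (n - j) (Qpol lam)).coeff d := by
    intro d hd
    rw [hasse_Qpol_coeff hd hj]
    apply mul_pos
    · exact_mod_cast Nat.cast_pos.mpr (Nat.choose_pos (Nat.le_add_left _ _))
    · rcases Nat.eq_zero_or_pos (j - d) with h0 | h0
      · rw [h0, ← esymm_eq_gsymm]; simp [esymm, Finset.powersetCard_zero]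
      · exact hlam (j - d) h0 (by omega)
  rw [eval_eq_sum_range]
  apply Finset.sum_pos'
  · intro d hd
    rw [Finset.mem_range, hdeg] at hd
    exact mul_nonneg (hcoeff d (by omega)).le (pow_nonneg ht d)
  · refine ⟨0, by simp [hdeg], by simpa using (hcoeff 0 (by omega))⟩

lemma esymm_shift_pos {n j : ℕ} (hj : j ≤ n) (lam : Fin n → ℝ)
    (hlam : ∀ i, 1 ≤ i → i ≤ j → 0 < esymm n i lam) {t : ℝ} (ht : 0 ≤ t) :
    0 < esymm n j (lam + t • 1) := by
  rw [esymm_eq_gsymm, gsymm_shift hj]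
  exact hasse_eval_pos hj lam hlam ht

/-- All complex roots of the shifted polynomial are real and negative, when the symmetric
functions are positive. -/
lemma hasse_roots_neg {n j : ℕ} (hj : j ≤ n) (lam : Fin n → ℝ)
    (hlam : ∀ i, 1 ≤ i → i ≤ j → 0 < esymm n i lam) {z : ℂ}
    (hz : ((hasseDeriv (n - j) (Qpol lam)).map (algebraMap ℝ ℂ)).eval z = 0) :
    z.im = 0 ∧ z.re < 0 := by
  have hsp := splits_hasseDeriv (n - j) (Qpol_splits lam)
  have hne : hasseDeriv (n - j) (Qpol lam) ≠ 0 := by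
    intro h0
    have := hasse_eval_pos hj lam hlam (le_refl 0)
    rw [h0] at this; simp at this
  obtain ⟨him, hre⟩ := splits_root_real hsp hne hz
  refine ⟨him, ?_⟩
  by_contra h
  push_neg at h
  exact absurd hre (ne_of_gt (hasse_eval_pos hj lam hlam h))

/-- The complexification bridge. -/
lemma gsymm_complex_shift {n j : ℕ} (hj : j ≤ n) (y : Fin n → ℝ) (z : ℂ) :
    gsymm ℂ n j ((fun i => (y i : ℂ)) + z • 1)
      = ((hasseDeriv (n - j) (Qpol y)).map (algebraMap ℝ ℂ)).eval z := by
  rw [gsymm_shift hj]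
  congr 1
  have hmap : Qpol (fun i => (y i : ℂ)) = (Qpol y).map (algebraMap ℝ ℂ) := by
    rw [Qpol, Qpol, Polynomial.map_prod]
    refine Finset.prod_congr rfl fun i _ => by simp
  rw [hmap]
  ext d
  simp [hasseDeriv_coeff, coeff_map]

----------------- Phi -----------------

/-- The polynomial `t ↦ σ_k(a + t b)`. -/
def Phi (n k : ℕ) (a b : Fin n → ℂ) : ℂ[X] :=
  ∑ s ∈ Finset.powersetCard k Finset.univ, ∏ i ∈ s, (C (a i) + C (b i) * X)

lemma Phi_eval (n k : ℕ) (a b : Fin n → ℂ) (z : ℂ) :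
    (Phi n k a b).eval z = gsymm ℂ n k (a + z • b) := by
  rw [Phi, eval_finset_sum, gsymm]
  refine Finset.sum_congr rfl fun s _ => ?_
  rw [eval_prod]
  refine Finset.prod_congr rfl fun i _ => by
    simp only [eval_add, eval_mul, eval_C, eval_X, Pi.add_apply, Pi.smul_apply, smul_eq_mul]
    ring

lemma linear_coeff (u v : ℂ) (m : ℕ) :
    (C u + C v * X).coeff m = if m = 0 then u else if m = 1 then v else 0 := by
  rcases m with _ | _ | m
  · simp
  · simp
  · simp [coeff_C, coeff_X]

lemma linear_natDegree_le (u v : ℂ) : (C u + C v * X).natDegree ≤ 1 := by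
  apply natDegree_add_le_of_degree_le
  · simp
  · exact (natDegree_mul_le).trans (by simp)

lemma Phi_natDegree_le (n k : ℕ) (a b : Fin n → ℂ) : (Phi n k a b).natDegree ≤ k := by
  apply natDegree_sum_le_of_forall_le
  intro s hs
  apply (natDegree_prod_le _ _).trans
  calc ∑ i ∈ s, (C (a i) + C (b i) * X).natDegree
      ≤ ∑ _i ∈ s, 1 :=
        Finset.sum_le_sum (f := fun i => (C (a i) + C (b i) * X).natDegree)
          (g := fun _ => 1) fun i _ => linear_natDegree_le _ _
    _ = s.card := by simp
    _ = k := (Finset.mem_powersetCard.mp hs).2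

lemma Phi_coeff_top (n k : ℕ) (a b : Fin n → ℂ) :
    (Phi n k a b).coeff k = gsymm ℂ n k b := by
  rw [Phi, finset_sum_coeff, gsymm]
  refine Finset.sum_congr rfl fun s hs => ?_
  have hcard : s.card = k := (Finset.mem_powersetCard.mp hs).2
  have h := coeff_prod_of_natDegree_le (s := s) (fun i => C (a i) + C (b i) * X) 1
    (fun i _ => linear_natDegree_le _ _)
  rw [mul_one] at h
  rw [← hcard, h]
  refine Finset.prod_congr rfl fun i _ => by simp [linear_coeff]

lemma prod_linear_coeff_continuous {n : ℕ} (s : Finset (Fin n)) :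
    ∀ j : ℕ, Continuous fun p : (Fin n → ℂ) × (Fin n → ℂ) =>
      (∏ i ∈ s, (C (p.1 i) + C (p.2 i) * X)).coeff j := by
  induction s using Finset.induction with
  | empty =>
      intro j
      simp only [Finset.prod_empty, coeff_one]
      exact continuous_const
  | @insert x s hx ih =>
      intro j
      have hrw : ∀ p : (Fin n → ℂ) × (Fin n → ℂ),
          (∏ i ∈ insert x s, (C (p.1 i) + C (p.2 i) * X)).coeff j
            = ∑ d ∈ Finset.HasAntidiagonal.antidiagonal j,
                (if d.1 = 0 then p.1 x else if d.1 = 1 then p.2 x else 0)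
                  * (∏ i ∈ s, (C (p.1 i) + C (p.2 i) * X)).coeff d.2 := by
        intro p
        rw [Finset.prod_insert hx, coeff_mul]
        exact Finset.sum_congr rfl fun d _ => by rw [linear_coeff]
      simp only [hrw]
      refine continuous_finset_sum _ fun d _ => Continuous.mul ?_ (ih d.2)
      split_ifs
      · exact (continuous_apply x).comp continuous_fst
      · exact (continuous_apply x).comp continuous_snd
      · exact continuous_const

lemma Phi_coeff_continuous (n k j : ℕ) :
    Continuous fun p : (Fin n → ℂ) × (Fin n → ℂ) => (Phi n k p.1 p.2).coeff j := by
  simp only [Phi, finset_sum_coeff]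
  exact continuous_finset_sum _ fun s _ => prod_linear_coeff_continuous s j

----------------- root bounds -----------------

lemma root_norm_le {q : ℂ[X]} (hq : q ≠ 0) {z : ℂ} (hz : q.eval z = 0) :
    ‖z‖ ≤ 1 + (∑ j ∈ Finset.range q.natDegree, ‖q.coeff j‖) / ‖q.leadingCoeff‖ := by
  have hL : 0 < ‖q.leadingCoeff‖ := by
    simp [norm_pos_iff, leadingCoeff_ne_zero, hq]
  have hS : 0 ≤ ∑ j ∈ Finset.range q.natDegree, ‖q.coeff j‖ :=
    Finset.sum_nonneg fun j _ => norm_nonneg _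
  rcases le_or_gt ‖z‖ 1 with h1 | h1
  · calc ‖z‖ ≤ 1 := h1
      _ ≤ _ := le_add_of_nonneg_right (by positivity)
  have hk : 1 ≤ q.natDegree := by
    by_contra h
    push_neg at h
    interval_cases hd : q.natDegree
    · rw [eq_C_of_natDegree_eq_zero hd] at hz hq
      simp at hz
      simp [hz] at hq
  have heval := hz
  rw [eval_eq_sum_range, Finset.sum_range_succ] at heval
  have hmain : q.leadingCoeff * z ^ q.natDegree
      = -∑ i ∈ Finset.range q.natDegree, q.coeff i * z ^ i := by
    rw [leadingCoeff]
    linear_combination heval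
  have hnorm : ‖q.leadingCoeff‖ * ‖z‖ ^ q.natDegree
      ≤ (∑ i ∈ Finset.range q.natDegree, ‖q.coeff i‖) * ‖z‖ ^ (q.natDegree - 1) := by
    calc ‖q.leadingCoeff‖ * ‖z‖ ^ q.natDegree
        = ‖q.leadingCoeff * z ^ q.natDegree‖ := by rw [norm_mul, norm_pow]
      _ = ‖∑ i ∈ Finset.range q.natDegree, q.coeff i * z ^ i‖ := by rw [hmain, norm_neg]
      _ ≤ ∑ i ∈ Finset.range q.natDegree, ‖q.coeff i * z ^ i‖ := norm_sum_le _ _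
      _ ≤ ∑ i ∈ Finset.range q.natDegree, ‖q.coeff i‖ * ‖z‖ ^ (q.natDegree - 1) := by
          refine Finset.sum_le_sum fun i hi => ?_
          rw [norm_mul, norm_pow]
          refine mul_le_mul_of_nonneg_left ?_ (norm_nonneg _)
          exact pow_le_pow_right₀ h1.le (by have := Finset.mem_range.mp hi; omega)
      _ = _ := by rw [← Finset.sum_mul]
  have hpow : ‖z‖ ^ q.natDegree = ‖z‖ ^ (q.natDegree - 1) * ‖z‖ := by
    rw [← pow_succ]
    congr 1
    omega
  have hzpos : 0 < ‖z‖ ^ (q.natDegree - 1) := by positivity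
  have h2 : ‖q.leadingCoeff‖ * ‖z‖ ≤ ∑ i ∈ Finset.range q.natDegree, ‖q.coeff i‖ := by
    have h3 : (‖q.leadingCoeff‖ * ‖z‖) * ‖z‖ ^ (q.natDegree - 1)
        ≤ (∑ i ∈ Finset.range q.natDegree, ‖q.coeff i‖) * ‖z‖ ^ (q.natDegree - 1) := by
      calc (‖q.leadingCoeff‖ * ‖z‖) * ‖z‖ ^ (q.natDegree - 1)
          = ‖q.leadingCoeff‖ * ‖z‖ ^ q.natDegree := by rw [hpow]; ring
        _ ≤ _ := hnorm
    exact le_of_mul_le_mul_right h3 hzpos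
  have h4 : ‖z‖ ≤ (∑ i ∈ Finset.range q.natDegree, ‖q.coeff i‖) / ‖q.leadingCoeff‖ := by
    rw [le_div_iff₀ hL]
    linarith
  linarith

lemma multiset_prod_ge {m : Multiset ℂ} {z : ℂ} {ε : ℝ} (hε : 0 ≤ ε)
    (h : ∀ r ∈ m, ε ≤ ‖z - r‖) :
    ε ^ Multiset.card m ≤ (m.map fun r => ‖z - r‖).prod := by
  induction m using Multiset.induction with
  | empty => simp
  | cons a s ih =>
      simp only [Multiset.map_cons, Multiset.prod_cons, Multiset.card_cons, pow_succ']
      have h1 : ε ≤ ‖z - a‖ := h a (Multiset.mem_cons_self a s)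
      have h2 : ε ^ Multiset.card s ≤ (s.map fun r => ‖z - r‖).prod :=
        ih fun r hr => h r (Multiset.mem_cons_of_mem hr)
      exact mul_le_mul h1 h2 (by positivity) (norm_nonneg _)

lemma eval_norm_ge {q : ℂ[X]} (hq : q ≠ 0) {z : ℂ} {ε : ℝ} (hε : 0 ≤ ε)
    (h : ∀ r ∈ q.roots, ε ≤ ‖z - r‖) :
    ‖q.leadingCoeff‖ * ε ^ q.natDegree ≤ ‖q.eval z‖ := by
  have hsp : q.Splits := IsAlgClosed.splits q
  have hcard : Multiset.card q.roots = q.natDegree := splits_iff_card_roots.mp hsp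
  have norm_multiset_prod' : ∀ m : Multiset ℂ, ‖m.prod‖ = (m.map norm).prod := by
    intro m
    induction m using Multiset.induction with
    | empty => simp
    | cons a s ih => simp [ih]
  calc ‖q.leadingCoeff‖ * ε ^ q.natDegree
      ≤ ‖q.leadingCoeff‖ * (q.roots.map fun r => ‖z - r‖).prod := by
        apply mul_le_mul_of_nonneg_left _ (norm_nonneg _)
        rw [← hcard]
        exact multiset_prod_ge hε h
    _ = ‖q.eval z‖ := by
        conv_rhs => rw [hsp.eq_prod_roots]
        rw [eval_mul, eval_C, norm_mul, eval_multiset_prod, Multiset.map_map,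
          norm_multiset_prod', Multiset.map_map]
        have hmc : Multiset.map (norm ∘ eval z ∘ fun a => X - C a) q.roots
            = Multiset.map (fun r => ‖z - r‖) q.roots :=
          Multiset.map_congr rfl fun r _ => by simp
        rw [hmc]

lemma exists_root_near {q : ℂ[X]} (hq : q ≠ 0) {z : ℂ} {ε : ℝ} (hε : 0 < ε)
    (h : ‖q.eval z‖ < ‖q.leadingCoeff‖ * ε ^ q.natDegree) :
    ∃ r ∈ q.roots, ‖z - r‖ < ε := by
  by_contra h2
  push_neg at h2
  exact absurd (eval_norm_ge hq hε.le h2) (not_le.mpr h)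

----------------- Batch 3 : hyperbolicity in cone directions -----------------

lemma gsymm_real_complex (n j : ℕ) (y : Fin n → ℝ) :
    gsymm ℂ n j (fun i => (y i : ℂ)) = ((gsymm ℝ n j y : ℝ) : ℂ) := by
  have h := gsymm_map (algebraMap ℝ ℂ) n j y
  simpa [Complex.coe_algebraMap] using h.symm

lemma hasse_ne_zero {n j : ℕ} (hj : j ≤ n) (y : Fin n → ℝ) :
    hasseDeriv (n - j) (Qpol y) ≠ 0 := by
  intro h0
  have h := hasse_Qpol_coeff (le_refl j) hj y
  rw [h0] at h
  simp only [coeff_zero] at h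
  have h1 : 0 < ((j + (n - j)).choose (n - j) : ℝ) := by
    exact_mod_cast Nat.choose_pos (Nat.le_add_left _ _)
  rw [Nat.sub_self, gsymm_zero, mul_one] at h
  exact absurd h.symm (ne_of_gt h1)

/-- No real roots in direction `μ` after shifting by `i·(α•𝟙)`: for any real vector `y`,
`σ_k(y + i𝟙) ≠ 0`. -/
lemma gsymm_add_I_ne_zero {n k : ℕ} (hkn : k ≤ n) (y : Fin n → ℝ) :
    gsymm ℂ n k ((fun i => (y i : ℂ)) + Complex.I • (1 : Fin n → ℂ)) ≠ 0 := by
  rw [gsymm_complex_shift hkn]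
  exact splits_eval_ne_zero (splits_hasseDeriv _ (Qpol_splits y)) (hasse_ne_zero hkn y)
    (by simp)

section Hyperbolic

variable {n k : ℕ} {μ : Fin n → ℝ}

/-- Step 1: roots of `t ↦ σ_k(i𝟙 + tμ)` lie in the lower half plane. -/
lemma step1 (hk1 : 1 ≤ k) (hkn : k ≤ n) (hμ : μ ∈ GardingCone n k) (w : ℂ)
    (hw : gsymm ℂ n k ((fun _ => Complex.I) + w • fun i => (μ i : ℂ)) = 0) : w.im < 0 := by
  have hw0 : w ≠ 0 := by
    rintro rfl
    have h1 : (fun _ : Fin n => Complex.I) + (0 : ℂ) • (fun i => (μ i : ℂ))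
        = Complex.I • (fun _ : Fin n => (1 : ℂ)) := by
      funext i; simp
    rw [h1, gsymm_smul, gsymm_one] at hw
    rcases mul_eq_zero.mp hw with h | h
    · exact pow_ne_zero _ Complex.I_ne_zero h
    · have := Nat.choose_pos hkn
      simp only [Nat.cast_eq_zero] at h
      omega
  set z : ℂ := Complex.I / w with hz
  have hwz : w * z = Complex.I := by
    rw [hz]; field_simp
  have hsplit : (fun _ : Fin n => Complex.I) + w • (fun i => (μ i : ℂ))
      = w • ((fun i => (μ i : ℂ)) + z • (1 : Fin n → ℂ)) := by
    funext i
    simp only [Pi.add_apply, Pi.smul_apply, Pi.one_apply, smul_eq_mul, mul_one]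
    rw [mul_add, mul_comm, ← hwz]
    ring
  rw [hsplit, gsymm_smul] at hw
  have hz0 : gsymm ℂ n k ((fun i => (μ i : ℂ)) + z • (1 : Fin n → ℂ)) = 0 := by
    rcases mul_eq_zero.mp hw with h | h
    · exact absurd h (pow_ne_zero _ hw0)
    · exact h
  rw [gsymm_complex_shift hkn] at hz0
  obtain ⟨him, hre⟩ := hasse_roots_neg hkn μ hμ hz0
  -- z is real and negative; w = I/z
  have hzre : z = ((z.re : ℝ) : ℂ) := by
    apply Complex.ext <;> simp [him]
  have hzne : z ≠ 0 := by
    rw [hzre]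
    simp only [ne_eq, Complex.ofReal_eq_zero]
    exact ne_of_lt hre
  have hwzre : w = Complex.I * ((z.re)⁻¹ : ℝ) := by
    have h5 : w = Complex.I / z := (eq_div_iff hzne).mpr hwz
    rw [h5]
    conv_lhs => rw [hzre]
    rw [div_eq_mul_inv, ← Complex.ofReal_inv]
  have : w.im = (z.re)⁻¹ := by
    rw [hwzre]
    simp
  rw [this]
  exact inv_lt_zero.mpr hre

end Hyperbolic

section Hyperbolic2

variable {n k : ℕ} {μ : Fin n → ℝ}

lemma Phi_props (hk1 : 1 ≤ k) (hμ : μ ∈ GardingCone n k) (a : Fin n → ℂ) :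
    (Phi n k a (fun i => (μ i : ℂ))).natDegree = k ∧
      (Phi n k a (fun i => (μ i : ℂ))).leadingCoeff = ((esymm n k μ : ℝ) : ℂ) ∧
      Phi n k a (fun i => (μ i : ℂ)) ≠ 0 := by
  have hpos : 0 < esymm n k μ := hμ k hk1 le_rfl
  have htop : (Phi n k a fun i => (μ i : ℂ)).coeff k = ((esymm n k μ : ℝ) : ℂ) := by
    rw [Phi_coeff_top, gsymm_real_complex, ← esymm_eq_gsymm]
  have hne : (Phi n k a fun i => (μ i : ℂ)).coeff k ≠ 0 := by
    rw [htop]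
    simp only [ne_eq, Complex.ofReal_eq_zero]
    exact ne_of_gt hpos
  have hdeg : (Phi n k a fun i => (μ i : ℂ)).natDegree = k :=
    le_antisymm (Phi_natDegree_le n k _ _) (le_natDegree_of_ne_zero hne)
  refine ⟨hdeg, ?_, fun h0 => hne (by rw [h0]; simp)⟩
  rw [leadingCoeff, hdeg, htop]

lemma step2 (hk1 : 1 ≤ k) (hkn : k ≤ n) (hμ : μ ∈ GardingCone n k) (x : Fin n → ℝ) (w : ℂ)
    (hw : gsymm ℂ n k ((fun i => (x i : ℂ) + Complex.I) + w • fun i => (μ i : ℂ)) = 0) :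
    w.im < 0 := by
  set mC : Fin n → ℂ := fun i => (μ i : ℂ) with hmC
  set A : ℝ → Fin n → ℂ := fun β i => ((β * x i : ℝ) : ℂ) + Complex.I with hA
  set good : ℝ → Prop := fun β => ∀ v : ℂ, gsymm ℂ n k (A β + v • mC) = 0 → v.im < 0
    with hgood
  have hLpos : (0:ℝ) < esymm n k μ := hμ k hk1 le_rfl
  -- no real roots along the homotopy
  have hnoreal : ∀ (β t : ℝ), gsymm ℂ n k (A β + (t : ℂ) • mC) ≠ 0 := by
    intro β t
    have hvec : A β + (t : ℂ) • mC
        = (fun i => ((β * x i + t * μ i : ℝ) : ℂ)) + Complex.I • (1 : Fin n → ℂ) := by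
      funext i
      simp only [Pi.add_apply, Pi.smul_apply, Pi.one_apply, smul_eq_mul, mul_one, hA, hmC]
      push_cast
      ring
    rw [hvec]
    exact gsymm_add_I_ne_zero hkn _
  -- continuity in β for fixed v
  have hgsc : ∀ v : ℂ, Continuous fun β : ℝ => gsymm ℂ n k (A β + v • mC) := by
    intro v
    apply (gsymm_continuous n k).comp
    apply continuous_pi
    intro i
    show Continuous fun β : ℝ => ((β * x i : ℝ) : ℂ) + Complex.I + v * mC i
    exact ((Complex.continuous_ofReal.comp (continuous_id.mul continuous_const)).add
      continuous_const).add continuous_const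
  -- S is closed
  have hSclosed : IsClosed {β : ℝ | β ∈ Set.Icc (0:ℝ) 1 ∧ good β} := by
    apply IsSeqClosed.isClosed
    intro u β hu hβ
    refine ⟨isClosed_Icc.isSeqClosed (fun m => (hu m).1) hβ, ?_⟩
    simp only [hgood]
    intro v hv
    by_contra hcon
    push_neg at hcon
    have hvim : 0 < v.im := by
      rcases lt_or_eq_of_le hcon with h | h
      · exact h
      · exfalso
        have hvre : v = ((v.re : ℝ) : ℂ) := Complex.ext (by simp) (by simp [← h])
        rw [hvre] at hv
        exact hnoreal β v.re hv
    have htend : Filter.Tendsto (fun m => gsymm ℂ n k (A (u m) + v • mC))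
        Filter.atTop (nhds 0) := by
      have h1 := ((hgsc v).tendsto β).comp hβ
      rwa [hv] at h1
    have hev : ∀ᶠ m in Filter.atTop,
        ‖gsymm ℂ n k (A (u m) + v • mC)‖ < ‖((esymm n k μ : ℝ) : ℂ)‖ * (v.im / 2) ^ k := by
      have htn := htend.norm
      rw [norm_zero] at htn
      apply Filter.Tendsto.eventually_lt_const _ htn
      have h8 : 0 < ‖((esymm n k μ : ℝ) : ℂ)‖ := by
        rw [Complex.norm_real, Real.norm_eq_abs]
        exact abs_pos.mpr (ne_of_gt hLpos)
      have h9 : 0 < v.im / 2 := by linarith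
      exact mul_pos h8 (pow_pos h9 k)
    obtain ⟨m, hm⟩ := hev.exists
    obtain ⟨hdeg, hlc, hne⟩ := Phi_props hk1 hμ (A (u m))
    have hnear : ∃ r ∈ (Phi n k (A (u m)) mC).roots, ‖v - r‖ < v.im / 2 := by
      apply exists_root_near hne (by positivity)
      rw [Phi_eval, hdeg, hlc]
      exact hm
    obtain ⟨r, hr, hrnear⟩ := hnear
    have hroot : gsymm ℂ n k (A (u m) + r • mC) = 0 := by
      rw [← Phi_eval]
      exact (Polynomial.mem_roots'.mp hr).2
    have him : r.im < 0 := (hu m).2 r hroot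
    have h6 : v.im - r.im ≤ ‖v - r‖ := by
      have h7 := Complex.abs_im_le_norm (v - r)
      rw [Complex.sub_im] at h7
      calc v.im - r.im ≤ |v.im - r.im| := le_abs_self _
        _ ≤ ‖v - r‖ := h7
    linarith
  -- T is closed
  have hTclosed : IsClosed {β : ℝ | β ∈ Set.Icc (0:ℝ) 1 ∧ ¬ good β} := by
    apply IsSeqClosed.isClosed
    intro u β hu hβ
    refine ⟨isClosed_Icc.isSeqClosed (fun m => (hu m).1) hβ, ?_⟩
    have hroots : ∀ m, ∃ v : ℂ, gsymm ℂ n k (A (u m) + v • mC) = 0 ∧ 0 ≤ v.im := by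
      intro m
      have h1 := (hu m).2
      simp only [hgood] at h1
      push_neg at h1
      obtain ⟨v, hv1, hv2⟩ := h1
      exact ⟨v, hv1, hv2⟩
    choose v hv1 hv2 using hroots
    have hcoeffcont : ∀ j : ℕ, Continuous fun β : ℝ => (Phi n k (A β) mC).coeff j := by
      intro j
      have hAc : Continuous fun β : ℝ => ((A β, mC) : (Fin n → ℂ) × (Fin n → ℂ)) := by
        apply Continuous.prodMk ?_ continuous_const
        apply continuous_pi
        intro i
        show Continuous fun β : ℝ => ((β * x i : ℝ) : ℂ) + Complex.I
        exact (Complex.continuous_ofReal.comp (continuous_id.mul continuous_const)).add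
          continuous_const
      have hPc := (Phi_coeff_continuous n k j).comp hAc
      exact hPc
    have hsum : Continuous fun β : ℝ => ∑ j ∈ Finset.range k, ‖(Phi n k (A β) mC).coeff j‖ :=
      continuous_finset_sum _ fun j _ => (hcoeffcont j).norm
    obtain ⟨β₀, hβ₀mem, hβ₀⟩ := isCompact_Icc.exists_isMaxOn
      (Set.nonempty_Icc.mpr zero_le_one) hsum.continuousOn
    set M := ∑ j ∈ Finset.range k, ‖(Phi n k (A β₀) mC).coeff j‖ with hM
    set R := 1 + M / ‖((esymm n k μ : ℝ) : ℂ)‖ with hR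
    have hbound : ∀ m, v m ∈ Metric.closedBall (0:ℂ) R := by
      intro m
      rw [Metric.mem_closedBall, dist_zero_right]
      obtain ⟨hdeg, hlc, hne⟩ := Phi_props hk1 hμ (A (u m))
      have hroot : (Phi n k (A (u m)) mC).eval (v m) = 0 := by
        rw [Phi_eval]
        exact hv1 m
      have h1 := root_norm_le hne hroot
      rw [hdeg, hlc] at h1
      refine h1.trans ?_
      rw [hR]
      gcongr
      exact hβ₀ (hu m).1
    obtain ⟨w0, _, φ, hφmono, hφ⟩ := (isCompact_closedBall (0:ℂ) R).tendsto_subseq hbound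
    have hG : Continuous fun p : ℝ × ℂ => gsymm ℂ n k (A p.1 + p.2 • mC) := by
      apply (gsymm_continuous n k).comp
      apply continuous_pi
      intro i
      show Continuous fun p : ℝ × ℂ => ((p.1 * x i : ℝ) : ℂ) + Complex.I + p.2 * mC i
      exact ((Complex.continuous_ofReal.comp (continuous_fst.mul continuous_const)).add
        continuous_const).add (continuous_snd.mul continuous_const)
    have hzero : gsymm ℂ n k (A β + w0 • mC) = 0 := by
      have htt : Filter.Tendsto (fun m => ((u (φ m)), v (φ m)))
          Filter.atTop (nhds (β, w0)) :=
        (hβ.comp hφmono.tendsto_atTop).prodMk_nhds hφ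
      have h2 := (hG.tendsto (β, w0)).comp htt
      have h3 : (fun m => gsymm ℂ n k (A (u (φ m)) + (v (φ m)) • mC))
          = fun _ => (0:ℂ) := funext fun m => hv1 _
      rw [show ((fun p : ℝ × ℂ => gsymm ℂ n k (A p.1 + p.2 • mC)) ∘
          fun m => (u (φ m), v (φ m)))
          = fun m => gsymm ℂ n k (A (u (φ m)) + (v (φ m)) • mC) from rfl, h3] at h2
      simpa using tendsto_nhds_unique h2 tendsto_const_nhds
    have himpos : 0 ≤ w0.im := by
      have h4 : Filter.Tendsto (fun m => (v (φ m)).im) Filter.atTop (nhds w0.im) :=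
        (Complex.continuous_im.tendsto w0).comp hφ
      exact le_of_tendsto_of_tendsto' tendsto_const_nhds h4 (fun m => hv2 _)
    simp only [hgood]
    push_neg
    exact ⟨w0, hzero, himpos⟩
  -- connectedness
  by_contra hcon
  have hS0 : (0:ℝ) ∈ {β : ℝ | β ∈ Set.Icc (0:ℝ) 1 ∧ good β} := by
    refine ⟨by simp, ?_⟩
    simp only [hgood]
    intro v hv
    apply step1 hk1 hkn hμ v
    have hA0 : A 0 = fun _ => Complex.I := by
      funext i
      simp [hA]
    rwa [hA0] at hv
  have hT1 : (1:ℝ) ∈ {β : ℝ | β ∈ Set.Icc (0:ℝ) 1 ∧ ¬ good β} := by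
    refine ⟨by simp, ?_⟩
    simp only [hgood]
    push_neg
    refine ⟨w, ?_, not_lt.mp hcon⟩
    have hA1 : A 1 = fun i => (x i : ℂ) + Complex.I := by
      funext i
      simp [hA]
    rwa [hA1]
  have hcover : Set.Icc (0:ℝ) 1 ⊆ {β : ℝ | β ∈ Set.Icc (0:ℝ) 1 ∧ good β}
      ∪ {β : ℝ | β ∈ Set.Icc (0:ℝ) 1 ∧ ¬ good β} := by
    intro β hβ
    by_cases h : good β
    · exact Or.inl ⟨hβ, h⟩
    · exact Or.inr ⟨hβ, h⟩
  obtain ⟨p, hp⟩ := isPreconnected_closed_iff.mp isPreconnected_Icc _ _ hSclosed hTclosed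
    hcover ⟨0, by simp, hS0⟩ ⟨1, by simp, hT1⟩
  exact hp.2.2.2 hp.2.1.2

end Hyperbolic2

section Hyperbolic3

variable {n k : ℕ} {μ : Fin n → ℝ}

lemma step2' (hk1 : 1 ≤ k) (hkn : k ≤ n) (hμ : μ ∈ GardingCone n k) (x : Fin n → ℝ)
    {α : ℝ} (hα : 0 < α) (w : ℂ)
    (hw : gsymm ℂ n k ((fun i => (x i : ℂ) + (α : ℂ) * Complex.I)
      + w • fun i => (μ i : ℂ)) = 0) :
    w.im < 0 := by
  have hαC : (α : ℂ) ≠ 0 := by exact_mod_cast ne_of_gt hα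
  have hvec : (fun i => (x i : ℂ) + (α : ℂ) * Complex.I) + w • (fun i => (μ i : ℂ))
      = (α : ℂ) • ((fun i => ((x i / α : ℝ) : ℂ) + Complex.I)
          + (w / α) • fun i => (μ i : ℂ)) := by
    funext i
    simp only [Pi.add_apply, Pi.smul_apply, smul_eq_mul, Complex.ofReal_div]
    field_simp
  rw [hvec, gsymm_smul] at hw
  have h0 : gsymm ℂ n k ((fun i => ((x i / α : ℝ) : ℂ) + Complex.I)
      + (w / α) • fun i => (μ i : ℂ)) = 0 := by
    rcases mul_eq_zero.mp hw with h | h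
    · exact absurd h (pow_ne_zero _ hαC)
    · exact h
  have h1 := step2 hk1 hkn hμ (fun i => x i / α) (w / (α : ℂ)) h0
  have him : (w / (α : ℂ)).im = w.im / α := by
    rw [div_eq_mul_inv, ← Complex.ofReal_inv]
    simp [Complex.mul_im]
    field_simp
  rw [him] at h1
  have h2 := mul_lt_mul_of_pos_right h1 hα
  rw [div_mul_cancel₀ _ (ne_of_gt hα), zero_mul] at h2
  exact h2

lemma dir_im_nonpos (hk1 : 1 ≤ k) (hkn : k ≤ n) (hμ : μ ∈ GardingCone n k)
    (y : Fin n → ℝ) (w : ℂ)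
    (hw : gsymm ℂ n k ((fun i => (y i : ℂ)) + w • fun i => (μ i : ℂ)) = 0) : w.im ≤ 0 := by
  by_contra hcon
  push_neg at hcon
  have hLpos : (0:ℝ) < esymm n k μ := hμ k hk1 le_rfl
  have hg : Continuous fun α : ℝ => gsymm ℂ n k
      ((fun i => (y i : ℂ) + (α : ℂ) * Complex.I) + w • fun i => (μ i : ℂ)) := by
    apply (gsymm_continuous n k).comp
    apply continuous_pi
    intro i
    show Continuous fun α : ℝ => ((y i : ℂ) + (α : ℂ) * Complex.I) + w * (μ i : ℂ)
    exact ((continuous_const.add (Complex.continuous_ofReal.mul continuous_const))).add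
      continuous_const
  have h0 : gsymm ℂ n k ((fun i => (y i : ℂ) + ((0:ℝ) : ℂ) * Complex.I)
      + w • fun i => (μ i : ℂ)) = 0 := by
    have : (fun i => (y i : ℂ) + ((0:ℝ) : ℂ) * Complex.I) = fun i => (y i : ℂ) := by
      funext i; simp
    rw [this]
    exact hw
  have htend : Filter.Tendsto (fun α : ℝ => ‖gsymm ℂ n k
      ((fun i => (y i : ℂ) + (α : ℂ) * Complex.I) + w • fun i => (μ i : ℂ))‖)
      (nhdsWithin 0 (Set.Ioi 0)) (nhds 0) := by
    have h1 := (hg.tendsto 0).mono_left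
      (nhdsWithin_le_nhds : nhdsWithin (0:ℝ) (Set.Ioi 0) ≤ nhds 0)
    rw [h0] at h1
    simpa using h1.norm
  have h8 : 0 < ‖((esymm n k μ : ℝ) : ℂ)‖ := by
    rw [Complex.norm_real, Real.norm_eq_abs]
    exact abs_pos.mpr (ne_of_gt hLpos)
  have hev : ∀ᶠ α : ℝ in nhdsWithin 0 (Set.Ioi 0), ‖gsymm ℂ n k
      ((fun i => (y i : ℂ) + (α : ℂ) * Complex.I) + w • fun i => (μ i : ℂ))‖
        < ‖((esymm n k μ : ℝ) : ℂ)‖ * (w.im / 2) ^ k := by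
    apply Filter.Tendsto.eventually_lt_const _ htend
    have h9 : 0 < w.im / 2 := by linarith
    exact mul_pos h8 (pow_pos h9 k)
  obtain ⟨α, hsmall, hαpos⟩ := (hev.and (eventually_mem_nhdsWithin)).exists
  rw [Set.mem_Ioi] at hαpos
  obtain ⟨hdeg, hlc, hne⟩ := Phi_props hk1 hμ (fun i => (y i : ℂ) + (α : ℂ) * Complex.I)
  have hnear : ∃ r ∈ (Phi n k (fun i => (y i : ℂ) + (α : ℂ) * Complex.I)
      (fun i => (μ i : ℂ))).roots, ‖w - r‖ < w.im / 2 := by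
    apply exists_root_near hne (by linarith)
    rw [Phi_eval, hdeg, hlc]
    exact hsmall
  obtain ⟨r, hr, hrnear⟩ := hnear
  have hroot : gsymm ℂ n k ((fun i => (y i : ℂ) + (α : ℂ) * Complex.I)
      + r • fun i => (μ i : ℂ)) = 0 := by
    rw [← Phi_eval]
    exact (Polynomial.mem_roots'.mp hr).2
  have him : r.im < 0 := step2' hk1 hkn hμ y hαpos r hroot
  have h6 : w.im - r.im ≤ ‖w - r‖ := by
    have h7 := Complex.abs_im_le_norm (w - r)
    rw [Complex.sub_im] at h7
    calc w.im - r.im ≤ |w.im - r.im| := le_abs_self _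
      _ ≤ ‖w - r‖ := h7
  linarith

lemma dir_root_real (hk1 : 1 ≤ k) (hkn : k ≤ n) (hμ : μ ∈ GardingCone n k)
    (y : Fin n → ℝ) (w : ℂ)
    (hw : gsymm ℂ n k ((fun i => (y i : ℂ)) + w • fun i => (μ i : ℂ)) = 0) : w.im = 0 := by
  have h1 := dir_im_nonpos hk1 hkn hμ y w hw
  have h3 := congrArg (starRingEnd ℂ) hw
  rw [map_zero, gsymm_map (starRingEnd ℂ)] at h3
  have h5 : (fun i => (starRingEnd ℂ) ((((fun i => (y i : ℂ)) + w • fun i => (μ i : ℂ))) i))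
      = (fun i => (y i : ℂ)) + ((starRingEnd ℂ) w) • fun i => (μ i : ℂ) := by
    funext i
    simp [Complex.conj_ofReal]
  rw [h5] at h3
  have h4 := dir_im_nonpos hk1 hkn hμ y _ h3
  rw [Complex.conj_im] at h4
  linarith

lemma dir_root_esymm (hk1 : 1 ≤ k) (hkn : k ≤ n) (hμ : μ ∈ GardingCone n k)
    (y : Fin n → ℝ) (w : ℂ)
    (hw : gsymm ℂ n k ((fun i => (y i : ℂ)) + w • fun i => (μ i : ℂ)) = 0) :
    w.im = 0 ∧ esymm n k (y + w.re • μ) = 0 := by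
  have him := dir_root_real hk1 hkn hμ y w hw
  refine ⟨him, ?_⟩
  have hwre : w = ((w.re : ℝ) : ℂ) := Complex.ext (by simp) (by simp [him])
  rw [hwre] at hw
  have hvec : (fun i => (y i : ℂ)) + ((w.re : ℝ) : ℂ) • (fun i => (μ i : ℂ))
      = fun i => (((y + w.re • μ) i : ℝ) : ℂ) := by
    funext i
    push_cast
    simp
  rw [hvec, gsymm_real_complex] at hw
  rw [esymm_eq_gsymm]
  exact_mod_cast hw

end Hyperbolic3

section Master

variable {n k : ℕ} {μ : Fin n → ℝ}

lemma bridge (μ x : Fin n → ℝ) (t : ℝ) :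
    gsymm ℂ n k ((fun i => (x i : ℂ)) + ((t : ℝ) : ℂ) • fun i => (μ i : ℂ))
      = ((esymm n k (x + t • μ) : ℝ) : ℂ) := by
  have hvec : (fun i => (x i : ℂ)) + ((t : ℝ) : ℂ) • (fun i => (μ i : ℂ))
      = fun i => (((x + t • μ) i : ℝ) : ℂ) := by
    funext i
    push_cast
    simp
  rw [hvec, gsymm_real_complex, ← esymm_eq_gsymm]

lemma master (hk1 : 1 ≤ k) (hkn : k ≤ n) (hμ : μ ∈ GardingCone n k) (a b : Fin n → ℝ)
    (hpath : ∀ s : ℝ, s ∈ Set.Icc (0:ℝ) 1 → esymm n k (a + s • b) ≠ 0)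
    (ha : ∀ t : ℝ, 0 ≤ t → esymm n k (a + t • μ) ≠ 0) :
    ∀ t : ℝ, 0 ≤ t → esymm n k ((a + b) + t • μ) ≠ 0 := by
  set good : ℝ → Prop :=
    fun s => ∀ t : ℝ, 0 ≤ t → esymm n k ((a + s • b) + t • μ) ≠ 0 with hgood
  have hLpos : (0:ℝ) < esymm n k μ := hμ k hk1 le_rfl
  have hL8 : 0 < ‖((esymm n k μ : ℝ) : ℂ)‖ := by
    rw [Complex.norm_real, Real.norm_eq_abs]
    exact abs_pos.mpr (ne_of_gt hLpos)
  have hcont2 : Continuous fun p : ℝ × ℝ => esymm n k ((a + p.1 • b) + p.2 • μ) := by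
    show Continuous fun p : ℝ × ℝ => gsymm ℝ n k ((a + p.1 • b) + p.2 • μ)
    apply (gsymm_continuous n k).comp
    apply continuous_pi
    intro i
    show Continuous fun p : ℝ × ℝ => (a i + p.1 * b i) + p.2 * μ i
    exact ((continuous_const.add (continuous_fst.mul continuous_const))).add
      (continuous_snd.mul continuous_const)
  have hSclosed : IsClosed {s : ℝ | s ∈ Set.Icc (0:ℝ) 1 ∧ good s} := by
    apply IsSeqClosed.isClosed
    intro u s hu hs
    have hsIcc : s ∈ Set.Icc (0:ℝ) 1 := isClosed_Icc.isSeqClosed (fun m => (hu m).1) hs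
    refine ⟨hsIcc, ?_⟩
    simp only [hgood]
    intro t ht h0
    rcases eq_or_lt_of_le ht with h | h
    · apply hpath s hsIcc
      rw [← h] at h0
      simpa using h0
    · have hf : Filter.Tendsto (fun m => esymm n k ((a + (u m) • b) + t • μ))
          Filter.atTop (nhds 0) := by
        have h1 := (hcont2.tendsto (s, t)).comp (hs.prodMk_nhds tendsto_const_nhds)
        rw [show ((fun p : ℝ × ℝ => esymm n k ((a + p.1 • b) + p.2 • μ)) ∘ fun m => (u m, t))
          = fun m => esymm n k ((a + (u m) • b) + t • μ) from rfl, h0] at h1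
        exact h1
      have hev : ∀ᶠ m in Filter.atTop, |esymm n k ((a + (u m) • b) + t • μ)|
          < ‖((esymm n k μ : ℝ) : ℂ)‖ * (t / 2) ^ k := by
        apply Filter.Tendsto.eventually_lt_const (mul_pos hL8 (pow_pos (by linarith) k))
        simpa using hf.abs
      obtain ⟨m, hm⟩ := hev.exists
      obtain ⟨hdeg, hlc, hne⟩ := Phi_props hk1 hμ (fun i => (((a + (u m) • b) i : ℝ) : ℂ))
      have hnear : ∃ r ∈ (Phi n k (fun i => (((a + (u m) • b) i : ℝ) : ℂ))
          (fun i => (μ i : ℂ))).roots, ‖((t : ℝ) : ℂ) - r‖ < t / 2 := by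
        apply exists_root_near hne (by linarith)
        rw [Phi_eval, hdeg, hlc, bridge, Complex.norm_real, Real.norm_eq_abs]
        exact hm
      obtain ⟨r, hr, hrnear⟩ := hnear
      have hroot : gsymm ℂ n k ((fun i => (((a + (u m) • b) i : ℝ) : ℂ))
          + r • fun i => (μ i : ℂ)) = 0 := by
        rw [← Phi_eval]
        exact (Polynomial.mem_roots'.mp hr).2
      obtain ⟨hrim, hresymm⟩ := dir_root_esymm hk1 hkn hμ _ r hroot
      have hrre : t / 2 < r.re := by
        have h7 := Complex.abs_re_le_norm (((t : ℝ) : ℂ) - r)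
        rw [Complex.sub_re, Complex.ofReal_re] at h7
        have h9 : t - r.re ≤ |t - r.re| := le_abs_self _
        have h10 : |t - r.re| ≤ ‖((t : ℝ) : ℂ) - r‖ := by
          exact h7
        linarith
      exact (hu m).2 r.re (by linarith) hresymm
  have hTclosed : IsClosed {s : ℝ | s ∈ Set.Icc (0:ℝ) 1 ∧ ¬ good s} := by
    apply IsSeqClosed.isClosed
    intro u s hu hs
    have hsIcc : s ∈ Set.Icc (0:ℝ) 1 := isClosed_Icc.isSeqClosed (fun m => (hu m).1) hs
    refine ⟨hsIcc, ?_⟩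
    have hroots : ∀ m, ∃ t : ℝ, 0 ≤ t ∧ esymm n k ((a + (u m) • b) + t • μ) = 0 := by
      intro m
      have h1 := (hu m).2
      simp only [hgood] at h1
      push_neg at h1
      exact h1
    choose tt ht1 ht2 using hroots
    have hcoeffcont : ∀ j : ℕ, Continuous fun s' : ℝ =>
        (Phi n k (fun i => (((a + s' • b) i : ℝ) : ℂ)) (fun i => (μ i : ℂ))).coeff j := by
      intro j
      have hAc : Continuous fun s' : ℝ =>
          (((fun i => (((a + s' • b) i : ℝ) : ℂ)), (fun i => (μ i : ℂ))) :
            (Fin n → ℂ) × (Fin n → ℂ)) := by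
        apply Continuous.prodMk ?_ continuous_const
        apply continuous_pi
        intro i
        show Continuous fun s' : ℝ => ((a i + s' * b i : ℝ) : ℂ)
        exact Complex.continuous_ofReal.comp
          (continuous_const.add (continuous_id.mul continuous_const))
      have hPc := (Phi_coeff_continuous n k j).comp hAc
      exact hPc
    have hsum : Continuous fun s' : ℝ => ∑ j ∈ Finset.range k,
        ‖(Phi n k (fun i => (((a + s' • b) i : ℝ) : ℂ)) (fun i => (μ i : ℂ))).coeff j‖ :=
      continuous_finset_sum _ fun j _ => (hcoeffcont j).norm
    obtain ⟨s₀, hs₀mem, hs₀⟩ := isCompact_Icc.exists_isMaxOn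
      (Set.nonempty_Icc.mpr zero_le_one) hsum.continuousOn
    set M := ∑ j ∈ Finset.range k,
      ‖(Phi n k (fun i => (((a + s₀ • b) i : ℝ) : ℂ)) (fun i => (μ i : ℂ))).coeff j‖ with hM
    set R := 1 + M / ‖((esymm n k μ : ℝ) : ℂ)‖ with hR
    have hbound : ∀ m, tt m ∈ Set.Icc (0:ℝ) R := by
      intro m
      refine ⟨ht1 m, ?_⟩
      obtain ⟨hdeg, hlc, hne⟩ := Phi_props hk1 hμ (fun i => (((a + (u m) • b) i : ℝ) : ℂ))
      have hroot : (Phi n k (fun i => (((a + (u m) • b) i : ℝ) : ℂ))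
          (fun i => (μ i : ℂ))).eval ((tt m : ℝ) : ℂ) = 0 := by
        rw [Phi_eval, bridge, ht2 m]
        simp
      have h1 := root_norm_le hne hroot
      rw [hdeg, hlc] at h1
      have h2 : ‖((tt m : ℝ) : ℂ)‖ = tt m := by
        rw [Complex.norm_real, Real.norm_eq_abs]
        exact abs_of_nonneg (ht1 m)
      rw [h2] at h1
      refine h1.trans ?_
      rw [hR]
      gcongr
      exact hs₀ (hu m).1
    obtain ⟨τ, hτmem, φ, hφmono, hφ⟩ := isCompact_Icc.tendsto_subseq hbound
    have hzero : esymm n k ((a + s • b) + τ • μ) = 0 := by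
      have htt : Filter.Tendsto (fun m => (u (φ m), tt (φ m)))
          Filter.atTop (nhds (s, τ)) :=
        (hs.comp hφmono.tendsto_atTop).prodMk_nhds hφ
      have h2 := (hcont2.tendsto (s, τ)).comp htt
      have h3 : ((fun p : ℝ × ℝ => esymm n k ((a + p.1 • b) + p.2 • μ)) ∘
          fun m => (u (φ m), tt (φ m))) = fun _ => (0:ℝ) :=
        funext fun m => ht2 (φ m)
      rw [h3] at h2
      simpa using tendsto_nhds_unique h2 tendsto_const_nhds
    simp only [hgood]
    push_neg
    exact ⟨τ, hτmem.1, hzero⟩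
  have hS0 : (0:ℝ) ∈ {s : ℝ | s ∈ Set.Icc (0:ℝ) 1 ∧ good s} := by
    refine ⟨by simp, ?_⟩
    simp only [hgood]
    intro t ht
    simpa using ha t ht
  have hgood1 : good 1 := by
    by_contra hnot
    have hT1 : (1:ℝ) ∈ {s : ℝ | s ∈ Set.Icc (0:ℝ) 1 ∧ ¬ good s} := ⟨by simp, hnot⟩
    have hcover : Set.Icc (0:ℝ) 1 ⊆ {s : ℝ | s ∈ Set.Icc (0:ℝ) 1 ∧ good s}
        ∪ {s : ℝ | s ∈ Set.Icc (0:ℝ) 1 ∧ ¬ good s} := by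
      intro s hsm
      by_cases h : good s
      · exact Or.inl ⟨hsm, h⟩
      · exact Or.inr ⟨hsm, h⟩
    obtain ⟨p, hp⟩ := isPreconnected_closed_iff.mp isPreconnected_Icc _ _ hSclosed hTclosed
      hcover ⟨0, by simp, hS0⟩ ⟨1, by simp, hT1⟩
    exact hp.2.2.2 hp.2.1.2
  simp only [hgood] at hgood1
  intro t ht
  have := hgood1 t ht
  rwa [one_smul] at this

end Master

section Cone

variable {n k : ℕ} {μ ν : Fin n → ℝ}

lemma cone_smul {c : ℝ} (hc : 0 < c) (hμ : μ ∈ GardingCone n k) :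
    c • μ ∈ GardingCone n k := by
  intro j hj1 hj2
  rw [esymm_eq_gsymm, gsymm_smul, ← esymm_eq_gsymm]
  exact mul_pos (pow_pos hc j) (hμ j hj1 hj2)

lemma cone_shift (hkn : k ≤ n) (hμ : μ ∈ GardingCone n k) {t : ℝ} (ht : 0 ≤ t) :
    μ + t • (1 : Fin n → ℝ) ∈ GardingCone n k := by
  intro j hj1 hj2
  exact esymm_shift_pos (le_trans hj2 hkn) μ
    (fun i hi1 hi2 => hμ i hi1 (le_trans hi2 hj2)) ht

lemma one_mem (hkn : k ≤ n) : (1 : Fin n → ℝ) ∈ GardingCone n k := by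
  intro j hj1 hj2
  have h : esymm n j (1 : Fin n → ℝ) = (n.choose j : ℝ) := by
    rw [esymm_eq_gsymm]
    exact gsymm_one n j
  rw [h]
  exact_mod_cast Nat.choose_pos (le_trans hj2 hkn)

lemma esymm_ne_zero_of_mem (hk1 : 1 ≤ k) (hμ : μ ∈ GardingCone n k) :
    esymm n k μ ≠ 0 := ne_of_gt (hμ k hk1 le_rfl)

/-- Every element of the cone is in the "hyperbolicity cone" of every element. -/
lemma C_of_mem (hk1 : 1 ≤ k) (hkn : k ≤ n) (hμ : μ ∈ GardingCone n k)
    (hν : ν ∈ GardingCone n k) :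
    ∀ t : ℝ, 0 ≤ t → esymm n k (ν + t • μ) ≠ 0 := by
  -- Leg 0 : μ itself
  have h1 : ∀ t : ℝ, 0 ≤ t → esymm n k (μ + t • μ) ≠ 0 := by
    intro t ht
    have hvec : μ + t • μ = (1 + t) • μ := by
      funext i
      simp only [Pi.add_apply, Pi.smul_apply, smul_eq_mul]
      ring
    rw [hvec, esymm_eq_gsymm, gsymm_smul, ← esymm_eq_gsymm]
    exact mul_ne_zero (pow_ne_zero _ (by linarith)) (esymm_ne_zero_of_mem hk1 hμ)
  -- Leg 1 : to μ + 1
  have h2 := master hk1 hkn hμ μ 1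
    (fun s hs => esymm_ne_zero_of_mem hk1 (cone_shift hkn hμ hs.1)) h1
  -- Leg 2 : to 1
  have h3path : ∀ s : ℝ, s ∈ Set.Icc (0:ℝ) 1 →
      esymm n k ((μ + 1) + s • (-μ)) ≠ 0 := by
    intro s hs
    rcases eq_or_lt_of_le hs.2 with h | h
    · have hvec : (μ + 1) + s • (-μ) = (1 : Fin n → ℝ) := by
        funext i
        simp only [Pi.add_apply, Pi.one_apply, Pi.smul_apply, Pi.neg_apply, smul_eq_mul, h]
        ring
      rw [hvec]
      exact esymm_ne_zero_of_mem hk1 (one_mem hkn)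
    · have hs1 : 0 < 1 - s := by linarith
      have hvec : (μ + 1) + s • (-μ)
          = (1 - s) • (μ + (1 / (1 - s)) • (1 : Fin n → ℝ)) := by
        funext i
        simp only [Pi.add_apply, Pi.one_apply, Pi.smul_apply, Pi.neg_apply, smul_eq_mul]
        field_simp
        ring
      rw [hvec]
      exact esymm_ne_zero_of_mem hk1
        (cone_smul hs1 (cone_shift hkn hμ (by positivity)))
  have h3 := master hk1 hkn hμ (μ + 1) (-μ) h3path h2
  have e3 : (μ + 1) + (-μ) = (1 : Fin n → ℝ) := by
    funext i
    simp
  rw [e3] at h3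
  -- Leg 3 : to 1 + ν
  have h4path : ∀ s : ℝ, s ∈ Set.Icc (0:ℝ) 1 →
      esymm n k ((1 : Fin n → ℝ) + s • ν) ≠ 0 := by
    intro s hs
    rcases eq_or_lt_of_le hs.1 with h | h
    · have hvec : (1 : Fin n → ℝ) + s • ν = (1 : Fin n → ℝ) := by
        funext i
        simp [← h]
      rw [hvec]
      exact esymm_ne_zero_of_mem hk1 (one_mem hkn)
    · have hvec : (1 : Fin n → ℝ) + s • ν
          = s • (ν + (1 / s) • (1 : Fin n → ℝ)) := by
        funext i
        simp only [Pi.add_apply, Pi.one_apply, Pi.smul_apply, smul_eq_mul]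
        field_simp
        ring
      rw [hvec]
      exact esymm_ne_zero_of_mem hk1
        (cone_smul h (cone_shift hkn hν (by positivity)))
  have h4 := master hk1 hkn hμ 1 ν h4path h3
  -- Leg 4 : to ν
  have h5path : ∀ s : ℝ, s ∈ Set.Icc (0:ℝ) 1 →
      esymm n k (((1 : Fin n → ℝ) + ν) + s • (-(1 : Fin n → ℝ))) ≠ 0 := by
    intro s hs
    have hvec : ((1 : Fin n → ℝ) + ν) + s • (-(1 : Fin n → ℝ))
        = ν + (1 - s) • (1 : Fin n → ℝ) := by
      funext i
      simp only [Pi.add_apply, Pi.one_apply, Pi.smul_apply, Pi.neg_apply, smul_eq_mul]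
      ring
    rw [hvec]
    exact esymm_ne_zero_of_mem hk1 (cone_shift hkn hν (by linarith [hs.2]))
  have h5 := master hk1 hkn hμ (1 + ν) (-(1 : Fin n → ℝ)) h5path h4
  have e5 : ((1 : Fin n → ℝ) + ν) + (-(1 : Fin n → ℝ)) = ν := by
    funext i
    simp
  rwa [e5] at h5

lemma C_pos (hk1 : 1 ≤ k) (hμ : μ ∈ GardingCone n k)
    (hC : ∀ t : ℝ, 0 ≤ t → esymm n k (ν + t • μ) ≠ 0) :
    ∀ t : ℝ, 0 ≤ t → 0 < esymm n k (ν + t • μ) := by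
  intro t ht
  have hg : Continuous fun s : ℝ => esymm n k (μ + s • ν) := by
    show Continuous fun s : ℝ => gsymm ℝ n k (μ + s • ν)
    apply (gsymm_continuous n k).comp
    apply continuous_pi
    intro i
    show Continuous fun s : ℝ => μ i + s * ν i
    exact continuous_const.add (continuous_id.mul continuous_const)
  have h0 : 0 < esymm n k (μ + (0:ℝ) • ν) := by
    simpa using hμ k hk1 le_rfl
  have hev : ∀ᶠ s in nhds (0:ℝ), 0 < esymm n k (μ + s • ν) :=
    (hg.tendsto 0).eventually_const_lt h0
  obtain ⟨δ, hδpos, hδ⟩ := Metric.eventually_nhds_iff.mp hev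
  set s₀ : ℝ := min (δ / 2) (1 / (t + 1)) with hs₀
  have hs₀pos : 0 < s₀ := by
    apply lt_min (by linarith)
    positivity
  have hs₀δ : 0 < esymm n k (μ + s₀ • ν) := by
    apply hδ
    rw [Real.dist_eq, sub_zero, abs_of_pos hs₀pos]
    calc s₀ ≤ δ / 2 := min_le_left _ _
      _ < δ := by linarith
  set T : ℝ := 1 / s₀ with hT
  have hTt : t < T := by
    rw [hT]
    have h1 : s₀ ≤ 1 / (t + 1) := min_le_right _ _
    have h2 : 0 < t + 1 := by linarith
    rw [lt_div_iff₀ hs₀pos]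
    calc t * s₀ ≤ t * (1 / (t + 1)) := by
          apply mul_le_mul_of_nonneg_left h1 ht
      _ < 1 := by
          rw [mul_one_div, div_lt_one h2]
          linarith
  have hTpos : 0 < T := by positivity
  have hfT : 0 < esymm n k (ν + T • μ) := by
    have hvec : ν + T • μ = T • (μ + s₀ • ν) := by
      funext i
      simp only [Pi.add_apply, Pi.smul_apply, smul_eq_mul]
      rw [hT]
      field_simp
      ring
    rw [hvec, esymm_eq_gsymm, gsymm_smul, ← esymm_eq_gsymm]
    exact mul_pos (pow_pos hTpos k) hs₀δ
  have hf2 : Continuous fun s : ℝ => esymm n k (ν + s • μ) := by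
    show Continuous fun s : ℝ => gsymm ℝ n k (ν + s • μ)
    apply (gsymm_continuous n k).comp
    apply continuous_pi
    intro i
    show Continuous fun s : ℝ => ν i + s * μ i
    exact continuous_const.add (continuous_id.mul continuous_const)
  by_contra hcon
  push_neg at hcon
  have hlt : esymm n k (ν + t • μ) < 0 := lt_of_le_of_ne hcon (hC t ht)
  have hIVT := intermediate_value_Icc (le_of_lt hTt) hf2.continuousOn
  have h0mem : (0:ℝ) ∈ Set.Icc (esymm n k (ν + t • μ)) (esymm n k (ν + T • μ)) :=
    ⟨le_of_lt hlt, le_of_lt hfT⟩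
  obtain ⟨c, hc, hfc⟩ := hIVT h0mem
  exact hC c (le_trans ht hc.1) hfc

lemma main_add (hk1 : 1 ≤ k) (hkn : k ≤ n) (hμ : μ ∈ GardingCone n k)
    (hν : ν ∈ GardingCone n k) : 0 < esymm n k (μ + ν) := by
  have h1 := C_pos hk1 hμ (C_of_mem hk1 hkn hμ hν) 1 zero_le_one
  rwa [one_smul, add_comm] at h1

end Cone

section Easy

variable {n k : ℕ}

lemma gc_isOpen : IsOpen (GardingCone n k) := by
  have heq : GardingCone n k = ⋂ j ∈ Set.Icc 1 k, {μ : Fin n → ℝ | 0 < esymm n j μ} := by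
    ext μ
    constructor
    · intro h
      exact Set.mem_iInter₂.mpr fun j hj => h j hj.1 hj.2
    · intro h j h1 h2
      exact Set.mem_iInter₂.mp h j ⟨h1, h2⟩
  rw [heq]
  apply Set.Finite.isOpen_biInter (Set.finite_Icc 1 k)
  intro j _
  have hc : Continuous (esymm n j) := gsymm_continuous n j
  exact isOpen_lt continuous_const hc

lemma esymm_perm (j : ℕ) (μ : Fin n → ℝ) (σ : Equiv.Perm (Fin n)) :
    esymm n j (μ ∘ σ) = esymm n j μ := by
  rw [esymm, esymm]
  refine Finset.sum_bij' (fun s _ => s.map σ.toEmbedding)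
    (fun s _ => s.map σ.symm.toEmbedding) ?_ ?_ ?_ ?_ ?_
  · intro s hs
    rw [Finset.mem_powersetCard] at hs ⊢
    exact ⟨Finset.subset_univ _, by rw [Finset.card_map]; exact hs.2⟩
  · intro s hs
    rw [Finset.mem_powersetCard] at hs ⊢
    exact ⟨Finset.subset_univ _, by rw [Finset.card_map]; exact hs.2⟩
  · intro s _
    ext i
    simp
  · intro s _
    ext i
    simp
  · intro s _
    rw [Finset.prod_map]
    rfl

lemma positive_subset_gc (hkn : k ≤ n) :
    {μ : Fin n → ℝ | ∀ i, 0 < μ i} ⊆ GardingCone n k := by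
  intro μ hμ j hj1 hj2
  rw [esymm]
  apply Finset.sum_pos
  · intro s hs
    exact Finset.prod_pos fun i _ => hμ i
  · rw [Finset.nonempty_iff_ne_empty, ne_eq, Finset.powersetCard_eq_empty]
    simp only [Finset.card_univ, Fintype.card_fin, not_lt]
    omega

lemma esymm_one_eq_sum (μ : Fin n → ℝ) : esymm n 1 μ = ∑ i, μ i := by
  rw [esymm, Finset.powersetCard_one, Finset.sum_map]
  refine Finset.sum_congr rfl fun i _ => ?_
  simp

end Easy

end

/-- For `1 ≤ k ≤ n`, the Gårding cone `Γ_k` is an open convex cone with vertex at the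
origin, invariant under permutations of the coordinates, and `Γₙ ⊆ Γ_k ⊆ Γ₁`. -/
theorem stmt_9 (n k : ℕ) (hk1 : 1 ≤ k) (hkn : k ≤ n) :
    IsOpen (GardingCone n k) ∧ Convex ℝ (GardingCone n k) ∧
      (∀ μ ∈ GardingCone n k, ∀ t : ℝ, 0 < t → t • μ ∈ GardingCone n k) ∧
      (∀ μ ∈ GardingCone n k, ∀ σ : Equiv.Perm (Fin n), μ ∘ σ ∈ GardingCone n k) ∧
      {μ : Fin n → ℝ | ∀ i, 0 < μ i} ⊆ GardingCone n k ∧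
      GardingCone n k ⊆ {μ : Fin n → ℝ | 0 < ∑ i, μ i} := by
  have hadd : ∀ μ ∈ GardingCone n k, ∀ ν ∈ GardingCone n k,
      μ + ν ∈ GardingCone n k := by
    intro μ hμ ν hν j hj1 hj2
    have hμ' : μ ∈ GardingCone n j := fun i hi1 hi2 => hμ i hi1 (le_trans hi2 hj2)
    have hν' : ν ∈ GardingCone n j := fun i hi1 hi2 => hν i hi1 (le_trans hi2 hj2)
    exact main_add hj1 (le_trans hj2 hkn) hμ' hν'
  refine ⟨gc_isOpen, ?_, ?_, ?_, positive_subset_gc hkn, ?_⟩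
  · intro x hx y hy a b ha hb hab
    rcases eq_or_lt_of_le ha with h | h
    · subst h
      have hb1 : b = 1 := by linarith
      subst hb1
      simpa using hy
    · rcases eq_or_lt_of_le hb with h2 | h2
      · subst h2
        have ha1 : a = 1 := by linarith
        subst ha1
        simpa using hx
      · exact hadd _ (cone_smul h hx) _ (cone_smul h2 hy)
  · intro μ hμ t ht
    exact cone_smul ht hμ
  · intro μ hμ σ j hj1 hj2
    rw [esymm_perm]
    exact hμ j hj1 hj2
  · intro μ hμ
    rw [Set.mem_setOf_eq, ← esymm_one_eq_sum]
    exact hμ 1 le_rfl hk1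
end

section
/- Let 1 ≤ k ≤ n and let Γ_k = {μ ∈ ℝⁿ : σ_j(μ) > 0 for j = 1,…,k} be the k-th Gårding cone. Then the function μ ↦ log σ_k(μ) is concave on Γ_k. -/
open Finset Polynomial

namespace Gd

variable {R : Type*} [CommRing R]

/-- generic elementary symmetric polynomial -/
def ge (n k : ℕ) (x : Fin n → R) : R :=
  ∑ s ∈ Finset.powersetCard k Finset.univ, ∏ i ∈ s, x i

/-- evaluation of a coefficient tuple -/
def pev {k : ℕ} (c : Fin (k + 1) → R) (z : R) : R := ∑ i, c i * z ^ (i : ℕ)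

/-- coefficients of `t ↦ ge n k (x + t v)` -/
def pco (n k : ℕ) (x v : Fin n → R) (m : Fin (k + 1)) : R :=
  ∑ S ∈ powersetCard k (univ : Finset (Fin n)),
    ∑ A ∈ powersetCard (m : ℕ) S, (∏ i ∈ A, v i) * ∏ i ∈ S \ A, x i

theorem pev_eq_sum_range {k : ℕ} (c : Fin (k + 1) → R) (z : R) :
    pev c z = ∑ m ∈ Finset.range (k + 1),
      (if h : m < k + 1 then c ⟨m, h⟩ else 0) * z ^ m := by
  rw [pev, ← Fin.sum_univ_eq_sum_range (fun m => (if h : m < k + 1 then c ⟨m, h⟩ else 0) * z ^ m)]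
  exact Finset.sum_congr rfl fun i _ => by simp [i.isLt]

theorem pev_pco (n k : ℕ) (x v : Fin n → R) (t : R) :
    pev (pco n k x v) t = ge n k (fun i => x i + t * v i) := by
  classical
  rw [ge]
  have h1 : ∀ S ∈ powersetCard k (univ : Finset (Fin n)),
      (∏ i ∈ S, (x i + t * v i)) =
        ∑ m ∈ Finset.range (k + 1), ∑ A ∈ powersetCard m S,
          ((∏ i ∈ A, v i) * ∏ i ∈ S \ A, x i) * t ^ m := by
    intro S hS
    have hcard : S.card = k := (Finset.mem_powersetCard.mp hS).2
    have : (∏ i ∈ S, (x i + t * v i)) = ∏ i ∈ S, (t * v i + x i) := by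
      refine Finset.prod_congr rfl fun i _ => by ring
    rw [this, Finset.prod_add]
    rw [← hcard, Finset.powerset_card_biUnion, Finset.sum_biUnion (by intro i _ j _ hij; exact Finset.pairwise_disjoint_powersetCard S hij)]
    refine Finset.sum_congr rfl fun m _ => Finset.sum_congr rfl fun A hA => ?_
    have hAcard : A.card = m := (Finset.mem_powersetCard.mp hA).2
    rw [Finset.prod_mul_distrib, Finset.prod_const, hAcard]
    ring
  rw [Finset.sum_congr rfl h1, Finset.sum_comm, pev_eq_sum_range]
  refine Finset.sum_congr rfl fun m hm => ?_
  have hm' : m < k + 1 := Finset.mem_range.mp hm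
  rw [dif_pos hm', pco, Finset.sum_mul]
  exact Finset.sum_congr rfl fun S _ => by rw [Finset.sum_mul]

theorem pco_last (n k : ℕ) (x v : Fin n → R) :
    pco n k x v (Fin.last k) = ge n k v := by
  classical
  rw [pco, ge]
  refine Finset.sum_congr rfl fun S hS => ?_
  have hcard : S.card = k := (Finset.mem_powersetCard.mp hS).2
  have : powersetCard ((Fin.last k : Fin (k+1)) : ℕ) S = {S} := by
    simp only [Fin.val_last, ← hcard, Finset.powersetCard_self]
  rw [this, Finset.sum_singleton, Finset.sdiff_self, Finset.prod_empty, mul_one]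

theorem ge_zero (n : ℕ) (x : Fin n → R) : ge n 0 x = 1 := by
  simp [ge]

theorem ge_smul (n k : ℕ) (a : R) (x : Fin n → R) :
    ge n k (fun i => a * x i) = a ^ k * ge n k x := by
  classical
  rw [ge, ge, Finset.mul_sum]
  refine Finset.sum_congr rfl fun S hS => ?_
  have hcard : S.card = k := (Finset.mem_powersetCard.mp hS).2
  rw [Finset.prod_mul_distrib, Finset.prod_const, hcard]

theorem ge_ones (n k : ℕ) : ge n k (fun _ => (1 : R)) = (n.choose k : R) := by
  classical
  rw [ge]
  simp only [Finset.prod_const_one, Finset.sum_const, nsmul_eq_mul, mul_one]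
  rw [Finset.card_powersetCard, Finset.card_univ, Fintype.card_fin]

theorem ge_hom {T : Type*} [CommRing T] (φ : R →+* T) (n k : ℕ) (x : Fin n → R) :
    φ (ge n k x) = ge n k (fun i => φ (x i)) := by
  rw [ge, map_sum]
  exact Finset.sum_congr rfl fun S _ => by rw [map_prod]

theorem pco_hom {T : Type*} [CommRing T] (φ : R →+* T) (n k : ℕ) (x v : Fin n → R)
    (m : Fin (k + 1)) : φ (pco n k x v m) = pco n k (fun i => φ (x i)) (fun i => φ (v i)) m := by
  rw [pco, map_sum]
  refine Finset.sum_congr rfl fun S _ => ?_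
  rw [map_sum]
  refine Finset.sum_congr rfl fun A _ => ?_
  rw [map_mul, map_prod, map_prod]


/-! ### multiset enumeration -/

theorem exists_tuple {α : Type*} {k : ℕ} (M : Multiset α) (h : Multiset.card M = k) :
    ∃ r : Fin k → α, M = (List.ofFn r : List α) := by
  have hlen : M.toList.length = k := by rw [Multiset.length_toList, h]
  refine ⟨fun j => M.toList.get (Fin.cast hlen.symm j), ?_⟩
  have : List.ofFn (fun j : Fin k => M.toList.get (Fin.cast hlen.symm j)) = M.toList := by
    refine List.ext_get (by simp [hlen]) ?_
    intro i h1 h2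
    simp [List.get_ofFn]
  rw [this, Multiset.coe_toList]

/-! ### the polynomial `∏ (X + C (x i))` and its Hasse derivatives -/

variable {n k : ℕ}

/-- `Q x = ∏ i, (X + C (x i))` -/
noncomputable def Q (n : ℕ) (x : Fin n → ℝ) : Polynomial ℝ :=
  ∏ i ∈ (univ : Finset (Fin n)), (X + C (x i))

theorem Q_monic (x : Fin n → ℝ) : (Q n x).Monic :=
  monic_prod_of_monic _ _ fun i _ => monic_X_add_C (x i)

theorem Q_natDegree (x : Fin n → ℝ) : (Q n x).natDegree = n := by
  rw [Q, natDegree_prod_of_monic _ _ fun i _ => monic_X_add_C (x i)]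
  simp [natDegree_X_add_C]

theorem Q_coeff (x : Fin n → ℝ) {j : ℕ} (hj : j ≤ n) :
    (Q n x).coeff j = ge n (n - j) x := by
  rw [Q, Finset.prod_X_add_C_coeff _ _ (by simpa using hj)]
  rw [ge]
  congr 1
  simp [Finset.card_univ]

theorem Q_roots_card (x : Fin n → ℝ) : Multiset.card (Q n x).roots = n := by
  have hQ : Q n x = (((univ : Finset (Fin n)).val.map (fun i => -x i)).map
      (fun a => X - C a)).prod := by
    rw [Q, Finset.prod_eq_multiset_prod, Multiset.map_map]
    congr 1
    refine Multiset.map_congr rfl fun i _ => by simp [sub_neg_eq_add]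
  rw [hQ, roots_multiset_prod_X_sub_C]
  simp

theorem iter_deriv_roots_card (x : Fin n → ℝ) (m : ℕ) :
    n ≤ Multiset.card (derivative^[m] (Q n x)).roots + m := by
  induction m with
  | zero => simp [Q_roots_card x]
  | succ d hd =>
    rw [Function.iterate_succ_apply']
    have := card_roots_le_derivative (derivative^[d] (Q n x))
    omega

theorem iter_deriv_natDegree (x : Fin n → ℝ) (hkn : k ≤ n) :
    (derivative^[n - k] (Q n x)).natDegree = k ∧
      Multiset.card (derivative^[n - k] (Q n x)).roots = k := by
  have h1 := natDegree_iterate_derivative (Q n x) (n - k)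
  rw [Q_natDegree] at h1
  have h2 := iter_deriv_roots_card x (n - k)
  have h3 := card_roots' (derivative^[n - k] (Q n x))
  omega

/-- the polynomial whose evaluation at `t` is `ge n k (x + t)` -/
noncomputable def HD (n k : ℕ) (x : Fin n → ℝ) : Polynomial ℝ :=
  hasseDeriv (n - k) (Q n x)

theorem HD_eq_smul (x : Fin n → ℝ) :
    derivative^[n - k] (Q n x) = ((n - k).factorial : ℝ) • HD n k x := by
  rw [HD, ← Polynomial.factorial_smul_hasseDeriv (R := ℝ) (n - k)]
  simp only [LinearMap.smul_apply]
  rw [Nat.cast_smul_eq_nsmul]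

theorem HD_natDegree (x : Fin n → ℝ) (hkn : k ≤ n) : (HD n k x).natDegree = k ∧
    Multiset.card (HD n k x).roots = k := by
  have h := iter_deriv_natDegree x hkn
  rw [HD_eq_smul] at h
  have hc : ((n - k).factorial : ℝ) ≠ 0 := Nat.cast_ne_zero.mpr (Nat.factorial_ne_zero _)
  rwa [roots_smul_nonzero _ hc, Polynomial.smul_eq_C_mul, Polynomial.natDegree_C_mul hc] at h

theorem HD_coeff (x : Fin n → ℝ) (hkn : k ≤ n) {m : ℕ} (hm : m ≤ k) :
    (HD n k x).coeff m = ((m + (n - k)).choose (n - k) : ℝ) * ge n (k - m) x := by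
  rw [HD, hasseDeriv_coeff, Q_coeff x (by omega)]
  congr 2
  omega

theorem HD_eval (x : Fin n → ℝ) (hkn : k ≤ n) (t : ℝ) :
    (HD n k x).eval t = ge n k (fun i => x i + t) := by
  rw [HD, ← taylor_coeff]
  rw [taylor_apply, Q, Polynomial.prod_comp]
  have : ∀ i ∈ (univ : Finset (Fin n)), (X + C (x i)).comp (X + C t) = X + C (x i + t) := by
    intro i _
    simp [add_comp, map_add]
    ring
  rw [Finset.prod_congr rfl this, ← Q]
  rw [Q_coeff _ (by omega)]
  congr 1
  omega

theorem HD_leadingCoeff (x : Fin n → ℝ) (hkn : k ≤ n) :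
    (HD n k x).leadingCoeff = (n.choose k : ℝ) := by
  rw [leadingCoeff, (HD_natDegree x hkn).1, HD_coeff x hkn (le_refl k)]
  have h1 : k + (n - k) = n := by omega
  rw [h1, Nat.sub_self, ge_zero, mul_one, Nat.choose_symm hkn]

/-- Real-rootedness in direction `e`: factorization of `t ↦ σ_k(x + t e)`. -/
theorem e_factor (hkn : k ≤ n) (x : Fin n → ℝ) :
    ∃ r : Fin k → ℝ, ∀ t : ℝ,
      ge n k (fun i => x i + t) = (n.choose k : ℝ) * ∏ j, (t - r j) := by
  obtain ⟨hdeg, hcard⟩ := HD_natDegree x hkn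
  have hsplits : Splits (HD n k x) := by
    rw [splits_iff_card_roots, hcard, hdeg]
  have hfac := hsplits.eq_prod_roots
  obtain ⟨r, hr⟩ := exists_tuple (HD n k x).roots hcard
  refine ⟨r, fun t => ?_⟩
  rw [← HD_eval x hkn t]
  conv_lhs => rw [hfac]
  rw [HD_leadingCoeff x hkn, eval_mul, eval_C, eval_multiset_prod, hr]
  congr 1
  simp [Multiset.map_coe, Multiset.prod_coe, List.map_map, Function.comp_def, List.prod_ofFn]

end Gd

namespace Gd

variable {n k : ℕ}

/-- membership in the Gårding cone, in terms of `ge` -/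
def Cone (n k : ℕ) (x : Fin n → ℝ) : Prop := ∀ j, 1 ≤ j → j ≤ k → 0 < ge n j x

theorem cone_anti {x : Fin n → ℝ} (h : Cone n k x) {j : ℕ} (hj : j ≤ k) : Cone n j x :=
  fun i hi1 hij => h i hi1 (hij.trans hj)

theorem ge_shift_pos (hkn : k ≤ n) {x : Fin n → ℝ}
    (hx : Cone n k x) {t : ℝ} (ht : 0 ≤ t) (hk1 : 1 ≤ k) :
    0 < ge n k (fun i => x i + t) := by
  rw [← HD_eval x hkn t]
  rw [eval_eq_sum_range' (n := k + 1) (by rw [(HD_natDegree x hkn).1]; omega)]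
  apply Finset.sum_pos'
  · intro m hm
    have hm' : m ≤ k := by
      have := Finset.mem_range.mp hm; omega
    rw [HD_coeff x hkn hm']
    have hge : 0 ≤ ge n (k - m) x := by
      rcases Nat.eq_zero_or_pos (k - m) with h | h
      · rw [h, ge_zero]; norm_num
      · exact le_of_lt (hx _ h (by omega))
    positivity
  · refine ⟨0, Finset.mem_range.mpr (by omega), ?_⟩
    rw [HD_coeff x hkn (by omega)]
    simp only [Nat.zero_add, Nat.choose_self, Nat.cast_one, one_mul, Nat.sub_zero, pow_zero,
      mul_one]
    exact hx k hk1 le_rfl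

theorem choose_pos_real (hkn : k ≤ n) : (0 : ℝ) < (n.choose k : ℝ) := by
  exact_mod_cast Nat.choose_pos hkn

theorem ge_one_add_smul_pos (hk1 : 1 ≤ k) (hkn : k ≤ n) {y : Fin n → ℝ}
    (hy : Cone n k y) {s : ℝ} (hs : 0 ≤ s) :
    0 < ge n k (fun i => 1 + s * y i) := by
  rcases eq_or_lt_of_le hs with h | h
  · have : (fun i : Fin n => 1 + s * y i) = fun _ => (1 : ℝ) := by
      funext i; rw [← h]; ring
    rw [this, ge_ones]
    exact choose_pos_real hkn
  · have : (fun i : Fin n => 1 + s * y i) = fun i => s * (y i + s⁻¹) := by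
      funext i
      field_simp
      ring
    rw [this, ge_smul]
    exact mul_pos (pow_pos h k) (ge_shift_pos hkn hy (by positivity) hk1)

theorem ge_star_pos (hk1 : 1 ≤ k) (hkn : k ≤ n) {x : Fin n → ℝ}
    (hx : Cone n k x) {u : ℝ} (hu : 0 ≤ u) (hu1 : u ≤ 1) :
    0 < ge n k (fun i => (1 - u) + u * x i) := by
  rcases eq_or_lt_of_le hu with h | h
  · have : (fun i : Fin n => (1 - u) + u * x i) = fun _ => (1 : ℝ) := by
      funext i; rw [← h]; ring
    rw [this, ge_ones]
    exact choose_pos_real hkn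
  · have : (fun i : Fin n => (1 - u) + u * x i) = fun i => u * (x i + (1 - u) / u) := by
      funext i
      field_simp
      ring
    rw [this, ge_smul]
    have ht : 0 ≤ (1 - u) / u := by
      apply div_nonneg <;> linarith
    exact mul_pos (pow_pos h k) (ge_shift_pos hkn hx ht hk1)

theorem cone_smul {x : Fin n → ℝ} (h : Cone n k x) {c : ℝ} (hc : 0 < c) :
    Cone n k (fun i => c * x i) := by
  intro j hj1 hjk
  rw [ge_smul]
  exact mul_pos (pow_pos hc j) (h j hj1 hjk)

end Gd

namespace Gd

/-! ### coefficient tuples and polynomials -/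

/-- the polynomial with coefficient tuple `c` -/
noncomputable def PofC {K : Type*} [CommRing K] {k : ℕ} (c : Fin (k + 1) → K) : Polynomial K :=
  ∑ i : Fin (k + 1), C (c i) * X ^ (i : ℕ)

theorem PofC_eval {K : Type*} [CommRing K] {k : ℕ} (c : Fin (k + 1) → K) (z : K) :
    (PofC c).eval z = pev c z := by
  rw [PofC, Polynomial.eval_finset_sum, pev]
  exact Finset.sum_congr rfl fun i _ => by simp

theorem PofC_coeff {K : Type*} [CommRing K] {k : ℕ} (c : Fin (k + 1) → K) {m : ℕ}
    (hm : m < k + 1) : (PofC c).coeff m = c ⟨m, hm⟩ := by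
  rw [PofC, Polynomial.finset_sum_coeff]
  rw [Finset.sum_eq_single (⟨m, hm⟩ : Fin (k + 1))]
  · simp
  · intro i _ hne
    rw [Polynomial.coeff_C_mul, Polynomial.coeff_X_pow, if_neg, mul_zero]
    exact fun h => hne (Fin.ext h.symm)
  · simp

theorem PofC_coeff_gt {K : Type*} [CommRing K] {k : ℕ} (c : Fin (k + 1) → K) {m : ℕ}
    (hm : k < m) : (PofC c).coeff m = 0 := by
  rw [PofC, Polynomial.finset_sum_coeff]
  apply Finset.sum_eq_zero
  intro i _
  rw [Polynomial.coeff_C_mul, Polynomial.coeff_X_pow, if_neg, mul_zero]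
  omega

theorem PofC_natDegree_le {K : Type*} [CommRing K] {k : ℕ} (c : Fin (k + 1) → K) :
    (PofC c).natDegree ≤ k :=
  Polynomial.natDegree_le_iff_coeff_eq_zero.mpr fun _ hm => PofC_coeff_gt c hm

/-- lifting a real factorization to `ℂ` -/
theorem lift_factor {k : ℕ} (f : Fin (k + 1) → ℝ) (L : ℝ) (r : Fin k → ℝ)
    (h : ∀ t : ℝ, pev f t = L * ∏ j, (t - r j)) (z : ℂ) :
    pev (fun i => (f i : ℂ)) z = (L : ℂ) * ∏ j, (z - (r j : ℂ)) := by
  have hFG : PofC f = C L * ∏ j, (X - C (r j)) := by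
    apply Polynomial.funext
    intro t
    rw [PofC_eval, h t, eval_mul, eval_C, eval_prod]
    congr 1
    exact Finset.prod_congr rfl fun j _ => by simp
  have := congrArg (fun p => (p.map (algebraMap ℝ ℂ)).eval z) hFG
  simp only [PofC, Polynomial.map_sum, Polynomial.map_mul, Polynomial.map_prod,
    Polynomial.map_sub, Polynomial.map_C, Polynomial.map_X, Polynomial.map_pow,
    Polynomial.eval_finset_sum, Polynomial.eval_mul, Polynomial.eval_prod, Polynomial.eval_sub,
    Polynomial.eval_C, Polynomial.eval_X, Polynomial.eval_pow] at this
  rw [pev]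
  convert this using 2 <;> simp [algebraMap]

/-- factorization existence over `ℂ` -/
theorem cfact {k : ℕ} (hk : 0 < k) (c : Fin (k + 1) → ℂ) (hc : c (Fin.last k) ≠ 0) :
    ∃ ρ : Fin k → ℂ, ∀ z, pev c z = c (Fin.last k) * ∏ j, (z - ρ j) := by
  have hco : (PofC c).coeff k = c (Fin.last k) := by
    rw [PofC_coeff c (Nat.lt_succ_self k)]; rfl
  have hdeg : (PofC c).natDegree = k :=
    le_antisymm (PofC_natDegree_le c) (le_natDegree_of_ne_zero (by rw [hco]; exact hc))
  have hsplits : Splits (PofC c) := IsAlgClosed.splits _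
  have hcard : Multiset.card (PofC c).roots = k := by
    rw [splits_iff_card_roots.mp hsplits, hdeg]
  obtain ⟨ρ, hρ⟩ := exists_tuple (PofC c).roots hcard
  refine ⟨ρ, fun z => ?_⟩
  have hlc : (PofC c).leadingCoeff = c (Fin.last k) := by
    rw [leadingCoeff, hdeg, hco]
  have := congrArg (Polynomial.eval z) (hsplits.eq_prod_roots)
  rw [PofC_eval] at this
  rw [this, hlc, eval_mul, eval_C, eval_multiset_prod, hρ]
  congr 1
  simp [Multiset.map_coe, Multiset.prod_coe, List.map_map, Function.comp_def, List.prod_ofFn]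

theorem root_eq_of_factor {k : ℕ} {c : Fin (k + 1) → ℂ} {ρ : Fin k → ℂ} {L : ℂ} (hL : L ≠ 0)
    (hfac : ∀ z, pev c z = L * ∏ j, (z - ρ j)) {z : ℂ} (hz : pev c z = 0) : ∃ j, z = ρ j := by
  rw [hfac z] at hz
  rcases mul_eq_zero.mp hz with h | h
  · exact absurd h hL
  · obtain ⟨j, _, hj⟩ := Finset.prod_eq_zero_iff.mp h
    exact ⟨j, by linear_combination hj⟩

theorem factor_root {k : ℕ} {c : Fin (k + 1) → ℂ} {ρ : Fin k → ℂ} {L : ℂ}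
    (hfac : ∀ z, pev c z = L * ∏ j, (z - ρ j)) (j : Fin k) : pev c (ρ j) = 0 := by
  rw [hfac, Finset.prod_eq_zero (Finset.mem_univ j) (sub_self (ρ j)), mul_zero]

theorem pev_real_conj {k : ℕ} (f : Fin (k + 1) → ℝ) (z : ℂ) :
    pev (fun i => (f i : ℂ)) ((starRingEnd ℂ) z) = (starRingEnd ℂ) (pev (fun i => (f i : ℂ)) z) := by
  simp [pev, map_sum, map_mul, map_pow, Complex.conj_ofReal]

end Gd

namespace Gd

open Filter Topology

/-- Cauchy-type bound on roots -/
theorem root_bound {k : ℕ} {c : Fin (k + 1) → ℂ} {ρ : Fin k → ℂ}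
    (hfac : ∀ z, pev c z = c (Fin.last k) * ∏ j, (z - ρ j))
    {M δ : ℝ} (hM : ∀ i, ‖c i‖ ≤ M) (hδ : 0 < δ) (hlead : δ ≤ ‖c (Fin.last k)‖) (j : Fin k) :
    ‖ρ j‖ ≤ max 1 ((k * M) / δ) := by
  have hk : 0 < k := j.pos
  set z := ρ j with hzdef
  have hz : pev c z = 0 := factor_root hfac j
  by_cases h1 : ‖z‖ ≤ 1
  · exact h1.trans (le_max_left _ _)
  push_neg at h1
  have hsum : ∑ i ∈ Finset.univ.erase (Fin.last k), c i * z ^ (i : ℕ)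
      = - (c (Fin.last k) * z ^ k) := by
    have := Finset.sum_erase_add Finset.univ (fun i : Fin (k + 1) => c i * z ^ (i : ℕ))
      (Finset.mem_univ (Fin.last k))
    rw [pev] at hz
    rw [hz, Fin.val_last] at this
    linear_combination this
  have hnorm : δ * ‖z‖ ^ k ≤ (k : ℝ) * M * ‖z‖ ^ (k - 1) := by
    have h2 : ‖c (Fin.last k) * z ^ k‖ ≤ ∑ i ∈ Finset.univ.erase (Fin.last k), ‖c i‖ * ‖z‖ ^ (i : ℕ) := by
      rw [← norm_neg, ← hsum]
      exact (norm_sum_le _ _).trans (le_of_eq (Finset.sum_congr rfl fun i _ => by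
        rw [norm_mul, norm_pow]))
    have h3 : ∑ i ∈ Finset.univ.erase (Fin.last k), ‖c i‖ * ‖z‖ ^ (i : ℕ)
        ≤ ∑ _i ∈ Finset.univ.erase (Fin.last k), M * ‖z‖ ^ (k - 1) := by
      refine Finset.sum_le_sum fun i hi => ?_
      have hile : (i : ℕ) ≤ k - 1 := by
        have : i ≠ Fin.last k := (Finset.mem_erase.mp hi).1
        have : (i : ℕ) ≠ k := fun h => this (Fin.ext h)
        omega
      have : ‖z‖ ^ (i : ℕ) ≤ ‖z‖ ^ (k - 1) := pow_le_pow_right₀ h1.le hile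
      have h0 : (0:ℝ) ≤ ‖z‖ ^ (i:ℕ) := by positivity
      exact mul_le_mul (hM i) this h0 ((norm_nonneg _).trans (hM (Fin.last k)))
    rw [Finset.sum_const, Finset.card_erase_of_mem (Finset.mem_univ _), Finset.card_univ,
      Fintype.card_fin] at h3
    have h4 : δ * ‖z‖ ^ k ≤ ‖c (Fin.last k)‖ * ‖z ^ k‖ := by
      rw [norm_pow]
      exact mul_le_mul_of_nonneg_right hlead (by positivity)
    calc δ * ‖z‖ ^ k ≤ ‖c (Fin.last k) * z ^ k‖ := by rw [norm_mul]; exact h4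
      _ ≤ _ := h2.trans (h3.trans (by simp [nsmul_eq_mul, mul_assoc]))
  have hw : (0:ℝ) < ‖z‖ ^ (k - 1) := by positivity
  have hzk : ‖z‖ ^ k = ‖z‖ ^ (k - 1) * ‖z‖ := by
    rw [← pow_succ]
    congr 1
    omega
  rw [hzk] at hnorm
  have : ‖z‖ ≤ (k * M) / δ := by
    rw [le_div_iff₀ hδ]
    nlinarith
  exact this.trans (le_max_right _ _)

/-- Subsequential limit of factored polynomial families -/
theorem ml {k : ℕ} (c : ℕ → Fin (k + 1) → ℂ) (cl : Fin (k + 1) → ℂ)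
    (hc : ∀ i, Tendsto (fun m => c m i) atTop (𝓝 (cl i)))
    (hlead : cl (Fin.last k) ≠ 0)
    (ρ : ℕ → Fin k → ℂ)
    (hρ : ∀ m z, pev (c m) z = c m (Fin.last k) * ∏ j, (z - ρ m j)) :
    ∃ ρl : Fin k → ℂ, (∃ φ : ℕ → ℕ, StrictMono φ ∧
      ∀ j, Tendsto (fun l => ρ (φ l) j) atTop (𝓝 (ρl j))) ∧
      ∀ z, pev cl z = cl (Fin.last k) * ∏ j, (z - ρl j) := by
  set δ : ℝ := ‖cl (Fin.last k)‖ / 2 with hδdef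
  have hδ : 0 < δ := by
    have : 0 < ‖cl (Fin.last k)‖ := norm_pos_iff.mpr hlead
    positivity
  set M : ℝ := (∑ i, ‖cl i‖) + 1 with hMdef
  have hev : ∀ᶠ m in atTop, (∀ i, ‖c m i‖ ≤ M) ∧ δ ≤ ‖c m (Fin.last k)‖ := by
    have h1 : ∀ᶠ m in atTop, ∀ i, ‖c m i‖ ≤ M := by
      refine Filter.eventually_all.mpr fun i => ?_
      have hlt : ‖cl i‖ < M := by
        have : ‖cl i‖ ≤ ∑ i, ‖cl i‖ :=
          Finset.single_le_sum (fun i _ => norm_nonneg (cl i)) (Finset.mem_univ i)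
        rw [hMdef]; linarith
      exact ((hc i).norm.eventually (eventually_le_nhds hlt))
    have h2 : ∀ᶠ m in atTop, δ ≤ ‖c m (Fin.last k)‖ := by
      have hlt : δ < ‖cl (Fin.last k)‖ := by
        have : 0 < ‖cl (Fin.last k)‖ := norm_pos_iff.mpr hlead
        rw [hδdef]; linarith
      exact ((hc (Fin.last k)).norm.eventually (eventually_ge_nhds hlt))
    exact h1.and h2
  obtain ⟨N, hN⟩ := eventually_atTop.mp hev
  set B : ℝ := max 1 ((k * M) / δ) with hBdef
  have hB : 0 ≤ B := le_trans zero_le_one (le_max_left _ _)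
  have hseq : ∀ l : ℕ, ρ (l + N) ∈ Metric.closedBall (0 : Fin k → ℂ) B := by
    intro l
    rw [Metric.mem_closedBall, dist_zero_right]
    rw [pi_norm_le_iff_of_nonneg hB]
    intro j
    obtain ⟨h1, h2⟩ := hN (l + N) (Nat.le_add_left N l)
    exact root_bound (hρ (l + N)) h1 hδ h2 j
  obtain ⟨a, _, φ', hφ', hconv⟩ :=
    (isCompact_closedBall (0 : Fin k → ℂ) B).tendsto_subseq hseq
  refine ⟨a, ⟨fun l => φ' l + N, fun l1 l2 h => by
      simpa using Nat.add_lt_add_right (hφ' h) N, fun j => ?_⟩, fun z => ?_⟩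
  · exact (tendsto_pi_nhds.mp hconv) j
  · set φ : ℕ → ℕ := fun l => φ' l + N with hφdef
    have hφmono : StrictMono φ := fun l1 l2 h => by
      simpa [hφdef] using Nat.add_lt_add_right (hφ' h) N
    have htop : Tendsto φ atTop atTop := hφmono.tendsto_atTop
    have h1 : Tendsto (fun l => pev (c (φ l)) z) atTop (𝓝 (pev cl z)) := by
      rw [pev]
      refine tendsto_finset_sum _ fun i _ => ?_
      exact (Tendsto.comp (hc i) htop).mul_const _
    have h2 : Tendsto (fun l => c (φ l) (Fin.last k) * ∏ j, (z - ρ (φ l) j)) atTop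
        (𝓝 (cl (Fin.last k) * ∏ j, (z - a j))) := by
      refine Tendsto.mul (Tendsto.comp (hc _) htop) ?_
      refine tendsto_finset_prod _ fun j _ => ?_
      exact tendsto_const_nhds.sub ((tendsto_pi_nhds.mp hconv) j)
    have heq : (fun l => pev (c (φ l)) z)
        = fun l => c (φ l) (Fin.last k) * ∏ j, (z - ρ (φ l) j) := by
      funext l
      exact hρ (φ l) z
    rw [heq] at h1
    have := tendsto_nhds_unique h1 h2
    rw [pev] at this ⊢
    rw [this]

end Gd

namespace Gd

open Filter Topology

theorem pers {k : ℕ} (hk : 0 < k) (g : ℂ → ℝ) (hg : Continuous g)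
    (c : ℝ → Fin (k + 1) → ℂ)
    (hc : ∀ i, Continuous fun u => c u i)
    (hlead : ∀ u ∈ Set.Icc (0 : ℝ) 1, c u (Fin.last k) ≠ 0)
    (hnr : ∀ u ∈ Set.Icc (0 : ℝ) 1, ∀ z, pev (c u) z = 0 → g z ≠ 0)
    (hbase : ∀ z, pev (c 0) z = 0 → 0 < g z) :
    ∀ z, pev (c 1) z = 0 → 0 < g z := by
  classical
  set S : Set ℝ := Set.Icc 0 1 with hS
  set A : Set ℝ := {u | u ∈ S ∧ ∀ z, pev (c u) z = 0 → 0 < g z} with hA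
  set B : Set ℝ := {u | u ∈ S ∧ ∃ z, pev (c u) z = 0 ∧ g z < 0} with hB
  have key : ∀ (x : ℕ → ℝ), (∀ m, x m ∈ S) → ∀ u, Tendsto x atTop (𝓝 u) → u ∈ S →
      ∃ (ρm : ℕ → Fin k → ℂ) (ρl : Fin k → ℂ) (φ : ℕ → ℕ), StrictMono φ ∧
        (∀ m (z : ℂ), pev (c (x m)) z = 0 → ∃ j, z = ρm m j) ∧
        (∀ m j, pev (c (x m)) (ρm m j) = 0) ∧
        (∀ j, Tendsto (fun l => ρm (φ l) j) atTop (𝓝 (ρl j))) ∧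
        (∀ j, pev (c u) (ρl j) = 0) ∧
        (∀ z, pev (c u) z = 0 → ∃ j, z = ρl j) := by
    intro x hx u hxu hu
    choose ρm hρm using fun m => cfact hk (c (x m)) (hlead (x m) (hx m))
    have hcc : ∀ i, Tendsto (fun m => c (x m) i) atTop (𝓝 (c u i)) :=
      fun i => ((hc i).tendsto u).comp hxu
    obtain ⟨ρl, ⟨φ, hφ, hconv⟩, hfac⟩ := ml _ _ hcc (hlead u hu) ρm hρm
    exact ⟨ρm, ρl, φ, hφ,
      fun m z hz => root_eq_of_factor (hlead (x m) (hx m)) (hρm m) hz,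
      fun m j => factor_root (hρm m) j,
      hconv,
      fun j => factor_root hfac j,
      fun z hz => root_eq_of_factor (hlead u hu) hfac hz⟩
  have hAclosed : IsClosed A := by
    apply IsSeqClosed.isClosed
    intro x u hxA hxu
    have hxS : ∀ m, x m ∈ S := fun m => (hxA m).1
    have huS : u ∈ S := isClosed_Icc.isSeqClosed hxS hxu
    obtain ⟨ρm, ρl, φ, hφ, _, hroot, hconv, hρlroot, hall⟩ := key x hxS u hxu huS
    refine ⟨huS, fun z hz => ?_⟩
    obtain ⟨j, rfl⟩ := hall z hz
    have htends : Tendsto (fun l => g (ρm (φ l) j)) atTop (𝓝 (g (ρl j))) :=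
      (hg.tendsto _).comp (hconv j)
    have hge : 0 ≤ g (ρl j) := by
      apply ge_of_tendsto' htends
      exact fun l => le_of_lt ((hxA (φ l)).2 _ (hroot (φ l) j))
    exact lt_of_le_of_ne hge (Ne.symm (hnr u huS _ (hρlroot j)))
  have hBclosed : IsClosed B := by
    apply IsSeqClosed.isClosed
    intro x u hxB hxu
    have hxS : ∀ m, x m ∈ S := fun m => (hxB m).1
    have huS : u ∈ S := isClosed_Icc.isSeqClosed hxS hxu
    obtain ⟨ρm, ρl, φ, hφ, hmem, _, hconv, hρlroot, _⟩ := key x hxS u hxu huS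
    refine ⟨huS, ?_⟩
    by_contra hcon
    push_neg at hcon
    have hpos : ∀ j, 0 < g (ρl j) := by
      intro j
      have h1 : ¬ g (ρl j) < 0 := fun h => (hcon (ρl j) (hρlroot j)).not_gt h
      exact lt_of_le_of_ne (not_lt.mp h1) (Ne.symm (hnr u huS _ (hρlroot j)))
    have hev : ∀ᶠ l in atTop, ∀ j, 0 < g (ρm (φ l) j) :=
      Filter.eventually_all.mpr fun j =>
        ((hg.tendsto _).comp (hconv j)).eventually (eventually_gt_nhds (hpos j))
    obtain ⟨l, hl⟩ := hev.exists
    obtain ⟨z, hz, hgz⟩ := (hxB (φ l)).2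
    obtain ⟨j, rfl⟩ := hmem (φ l) z hz
    exact absurd (hl j) (not_lt.mpr hgz.le)
  have hcover : ∀ u ∈ S, u ∈ A ∪ B := by
    intro u hu
    by_cases h : ∀ z, pev (c u) z = 0 → 0 < g z
    · exact Or.inl ⟨hu, h⟩
    · push_neg at h
      obtain ⟨z, hz, hgz⟩ := h
      exact Or.inr ⟨hu, z, hz, lt_of_le_of_ne hgz (hnr u hu z hz)⟩
  have hdisj : ∀ u, u ∈ A → u ∈ B → False := by
    rintro u ⟨_, hall⟩ ⟨_, z, hz, hgz⟩
    exact absurd (hall z hz) (not_lt.mpr hgz.le)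
  have h0A : (0 : ℝ) ∈ A := ⟨by norm_num [hS], hbase⟩
  by_contra hcon1
  have h1B : (1 : ℝ) ∈ B := by
    rcases hcover 1 (by norm_num [hS]) with h | h
    · exact absurd h.2 hcon1
    · exact h
  have hpc := isPreconnected_Icc (a := (0 : ℝ)) (b := 1)
  rw [IsPreconnected] at hpc
  have := hpc Bᶜ Aᶜ hBclosed.isOpen_compl hAclosed.isOpen_compl
    (fun u hu => by
      by_cases hAu : u ∈ A
      · exact Or.inl fun hBu => hdisj u hAu hBu
      · rcases hcover u hu with h | h
        · exact absurd h hAu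
        · exact Or.inr hAu)
    ⟨0, by norm_num, fun h0B => hdisj 0 h0A h0B⟩
    ⟨1, by norm_num, fun h1A => hdisj 1 h1A h1B⟩
  obtain ⟨w, hwS, hwB, hwA⟩ := this
  rcases hcover w hwS with h | h
  · exact hwA h
  · exact hwB h

end Gd

namespace Gd

open Filter Topology Complex

variable {n k : ℕ}

/-- complex version of the `e`-direction factorization -/
theorem e_factor_C (hkn : k ≤ n) (y : Fin n → ℝ) :
    ∃ r : Fin k → ℝ, ∀ w : ℂ,
      ge n k (fun i => (y i : ℂ) + w) = (n.choose k : ℂ) * ∏ j, (w - (r j : ℂ)) := by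
  obtain ⟨r, hr⟩ := e_factor hkn y
  refine ⟨r, fun w => ?_⟩
  have hpev : ∀ t : ℝ, pev (pco n k y (fun _ => (1 : ℝ))) t = (n.choose k : ℝ) * ∏ j, (t - r j) := by
    intro t
    rw [pev_pco]
    have : (fun i => y i + t * 1) = fun i => y i + t := by funext i; ring
    rw [this, hr]
  have hlift := lift_factor _ _ _ hpev w
  have hcast : (fun i => ((pco n k y (fun _ => (1 : ℝ)) i : ℝ) : ℂ))
      = pco n k (fun i => (y i : ℂ)) (fun _ => (1 : ℂ)) := by
    funext i
    rw [show ((pco n k y (fun _ => (1:ℝ)) i : ℝ) : ℂ) = Complex.ofRealHom (pco n k y (fun _ => (1:ℝ)) i) from rfl,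
      pco_hom Complex.ofRealHom n k y (fun _ => 1) i]
    norm_num
  rw [hcast] at hlift
  rw [pev_pco] at hlift
  have : (fun i => (y i : ℂ) + w * 1) = fun i => (y i : ℂ) + w := by funext i; ring
  rwa [this] at hlift

/-- cast compatibility for `ge` -/
theorem ge_cast (m : ℕ) (y : Fin n → ℝ) :
    ((ge n m y : ℝ) : ℂ) = ge n m (fun i => (y i : ℂ)) := by
  rw [show ((ge n m y : ℝ) : ℂ) = Complex.ofRealHom (ge n m y) from rfl, ge_hom Complex.ofRealHom n m y]
  norm_num

/-- Step A: for `σ > 0`, all roots of `T ↦ σ_k(x - iσe + Tμ)` have positive imaginary part -/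
theorem stepA (hk1 : 1 ≤ k) (hkn : k ≤ n) (x μ : Fin n → ℝ) (hμ : Cone n k μ)
    {σ : ℝ} (hσ : 0 < σ) :
    ∀ z : ℂ, pev (pco n k (fun i => (x i : ℂ) - Complex.I * (σ : ℂ)) (fun i => (μ i : ℂ))) z = 0 →
      0 < z.im := by
  set s : ℝ → ℂ := fun u => -Complex.I * (((1 - u) + σ * u : ℝ) : ℂ) with hs
  set bc : ℝ → Fin n → ℂ := fun u i => (((1 - u) + u * μ i : ℝ) : ℂ) with hbc
  set c : ℝ → Fin (k + 1) → ℂ := fun u => pco n k (fun i => (x i : ℂ) + s u) (bc u) with hcdef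
  have hk0 : 0 < k := hk1
  -- continuity
  have hc : ∀ i, Continuous fun u => c u i := by
    intro i
    apply continuous_finset_sum
    intro S _
    apply continuous_finset_sum
    intro A _
    apply Continuous.mul
    · apply continuous_finset_prod
      intro j _
      exact Complex.continuous_ofReal.comp (by continuity)
    · apply continuous_finset_prod
      intro j _
      apply Continuous.add continuous_const
      exact Continuous.mul continuous_const (Complex.continuous_ofReal.comp (by continuity))
  -- leading coefficient
  have hlead : ∀ u ∈ Set.Icc (0 : ℝ) 1, c u (Fin.last k) ≠ 0 := by
    intro u hu
    rw [hcdef]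
    simp only [pco_last]
    rw [hbc]
    rw [← ge_cast]
    have := ge_star_pos hk1 hkn hμ hu.1 hu.2
    exact_mod_cast this.ne'
  -- no real roots
  have hnr : ∀ u ∈ Set.Icc (0 : ℝ) 1, ∀ z, pev (c u) z = 0 → z.im ≠ 0 := by
    intro u hu z hz him
    have hzre : z = ((z.re : ℝ) : ℂ) := by
      exact Complex.ext rfl (by simpa using him)
    rw [hcdef, pev_pco] at hz
    set y : Fin n → ℝ := fun i => x i + z.re * ((1 - u) + u * μ i) with hy
    have harg : (fun i => ((x i : ℂ) + s u) + z * bc u i) = fun i => (y i : ℂ) + s u := by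
      funext i
      rw [hy, hbc, hs]
      push_cast
      rw [← hzre]
      ring
    rw [harg] at hz
    obtain ⟨r, hr⟩ := e_factor_C hkn y
    rw [hr] at hz
    rcases mul_eq_zero.mp hz with h | h
    · have : (0 : ℝ) < n.choose k := by exact_mod_cast Nat.choose_pos hkn
      exact absurd h (by exact_mod_cast this.ne')
    · obtain ⟨j, _, hj⟩ := Finset.prod_eq_zero_iff.mp h
      have : (s u - (r j : ℂ)).im = 0 := by rw [hj]; rfl
      rw [hs] at this
      simp only [Complex.sub_im, Complex.ofReal_im, Complex.mul_im, Complex.neg_im,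
        Complex.neg_re, Complex.I_re, Complex.I_im, Complex.ofReal_re] at this
      have hpos : 0 < (1 - u) + σ * u := by
        rcases lt_or_eq_of_le hu.2 with h1 | h1
        · have := hu.1
          nlinarith
        · rw [h1]; linarith
      nlinarith [this]
  -- base case
  have hbase : ∀ z, pev (c 0) z = 0 → 0 < z.im := by
    intro z hz
    rw [hcdef, pev_pco] at hz
    have harg : (fun i => ((x i : ℂ) + s 0) + z * bc 0 i) = fun i => (x i : ℂ) + (z - Complex.I) := by
      funext i
      rw [hbc, hs]
      push_cast
      ring
    rw [harg] at hz
    obtain ⟨r, hr⟩ := e_factor_C hkn x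
    rw [hr] at hz
    rcases mul_eq_zero.mp hz with h | h
    · have : (0 : ℝ) < n.choose k := by exact_mod_cast Nat.choose_pos hkn
      exact absurd h (by exact_mod_cast this.ne')
    · obtain ⟨j, _, hj⟩ := Finset.prod_eq_zero_iff.mp h
      have : z = Complex.I + (r j : ℂ) := by linear_combination hj
      rw [this]
      simp
  have := pers hk0 Complex.im Complex.continuous_im c hc hlead hnr hbase
  intro z hz
  apply this z
  have hc1 : c 1 = pco n k (fun i => (x i : ℂ) - Complex.I * (σ : ℂ)) fun i => (μ i : ℂ) := by
    have e1 : (fun i : Fin n => (x i : ℂ) + s 1) = fun i => (x i : ℂ) - Complex.I * (σ : ℂ) := by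
      funext i; rw [hs]; push_cast; ring
    have e2 : bc 1 = fun i : Fin n => (μ i : ℂ) := by
      funext i; rw [hbc]; push_cast; ring
    simp only [hcdef]
    rw [e1, e2]
  rw [hc1]
  exact hz

end Gd

namespace Gd

open Filter Topology Complex

variable {n k : ℕ}

/-- Hyperbolicity of `σ_k` in every direction of the Gårding cone -/
theorem hyperb (hk1 : 1 ≤ k) (hkn : k ≤ n) (x μ : Fin n → ℝ) (hμ : Cone n k μ) :
    ∃ r : Fin k → ℝ, ∀ t : ℝ,
      ge n k (fun i => x i + t * μ i) = ge n k μ * ∏ j, (t - r j) := by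
  classical
  have hk0 : 0 < k := hk1
  have hgeμ : 0 < ge n k μ := hμ k hk1 le_rfl
  set xC : Fin n → ℂ := fun i => (x i : ℂ) with hxC
  set μC : Fin n → ℂ := fun i => (μ i : ℂ) with hμC
  set cm : ℕ → Fin (k + 1) → ℂ :=
    fun m => pco n k (fun i => xC i - Complex.I * ((1 / (m + 1) : ℝ) : ℂ)) μC with hcm
  set cl : Fin (k + 1) → ℂ := pco n k xC μC with hcl
  -- leading coefficients
  have hleadm : ∀ m, cm m (Fin.last k) = ge n k μC := fun m => by rw [hcm]; exact pco_last n k _ μC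
  have hleadl : cl (Fin.last k) = ge n k μC := by rw [hcl]; exact pco_last n k xC μC
  have hgeμC : ge n k μC = ((ge n k μ : ℝ) : ℂ) := (ge_cast k μ).symm
  have hlead0 : ge n k μC ≠ 0 := by
    rw [hgeμC]
    exact_mod_cast hgeμ.ne'
  -- convergence of coefficients
  have hconv : ∀ i, Tendsto (fun m => cm m i) atTop (𝓝 (cl i)) := by
    intro i
    have hF : Continuous fun σ : ℝ => pco n k (fun i => xC i - Complex.I * (σ : ℂ)) μC i := by
      apply continuous_finset_sum
      intro S _
      apply continuous_finset_sum
      intro A _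
      apply Continuous.mul continuous_const
      apply continuous_finset_prod
      intro j _
      exact Continuous.sub continuous_const
        (Continuous.mul continuous_const Complex.continuous_ofReal)
    have hσ : Tendsto (fun m : ℕ => (1 / (m + 1) : ℝ)) atTop (𝓝 0) :=
      tendsto_one_div_add_atTop_nhds_zero_nat
    have := (hF.tendsto 0).comp hσ
    simp only [Function.comp_def] at this
    convert this using 2
    rw [hcl]
    congr 1
    funext i'
    push_cast
    ring
  -- factorizations
  have hclne : cl (Fin.last k) ≠ 0 := by rw [hleadl]; exact hlead0
  choose ρm hρm using fun m => cfact hk0 (cm m) (by rw [hleadm]; exact hlead0)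
  have hρm' : ∀ m z, pev (cm m) z = cm m (Fin.last k) * ∏ j, (z - ρm m j) := hρm
  obtain ⟨ρl, ⟨φ, hφ, hconvρ⟩, hfac⟩ := ml cm cl hconv hclne ρm hρm'
  -- all limit roots have nonneg imaginary part
  have him_ge : ∀ j, 0 ≤ (ρl j).im := by
    intro j
    have htends : Tendsto (fun l => (ρm (φ l) j).im) atTop (𝓝 ((ρl j).im)) :=
      (Complex.continuous_im.tendsto _).comp (hconvρ j)
    apply ge_of_tendsto' htends
    intro l
    apply le_of_lt
    have hroot : pev (cm (φ l)) (ρm (φ l) j) = 0 := factor_root (hρm (φ l)) j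
    have := stepA hk1 hkn x μ hμ (σ := 1 / (φ l + 1))
      (by positivity) (ρm (φ l) j)
    apply this
    rw [hcm] at hroot
    exact_mod_cast hroot
  -- real coefficients: conjugate of a root is a root
  have hclreal : cl = fun i => ((pco n k x μ i : ℝ) : ℂ) := by
    funext i
    rw [hcl, show ((pco n k x μ i : ℝ) : ℂ) = Complex.ofRealHom (pco n k x μ i) from rfl,
      pco_hom Complex.ofRealHom n k x μ i]
    rfl
  have him_eq : ∀ j, (ρl j).im = 0 := by
    intro j
    have hroot : pev cl (ρl j) = 0 := by
      have := factor_root (L := cl (Fin.last k)) (fun z => hfac z) j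
      exact this
    have hconjroot : pev cl ((starRingEnd ℂ) (ρl j)) = 0 := by
      rw [hclreal] at hroot ⊢
      rw [pev_real_conj, hroot, map_zero]
    obtain ⟨j', hj'⟩ := root_eq_of_factor hclne (fun z => hfac z) hconjroot
    have h1 : ((starRingEnd ℂ) (ρl j)).im = -(ρl j).im := Complex.conj_im _
    have h2 := him_ge j'
    rw [← hj'] at h2
    rw [h1] at h2
    have h3 := him_ge j
    linarith
  -- extract real roots
  refine ⟨fun j => (ρl j).re, fun t => ?_⟩
  have hρlre : ∀ j, ρl j = (((ρl j).re : ℝ) : ℂ) := by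
    intro j
    exact Complex.ext rfl (by simpa using him_eq j)
  have hmain := hfac ((t : ℝ) : ℂ)
  rw [hcl, pev_pco] at hmain
  have harg : (fun i => xC i + ((t : ℝ) : ℂ) * μC i) = fun i => ((x i + t * μ i : ℝ) : ℂ) := by
    funext i
    rw [hxC, hμC]
    push_cast
    ring
  rw [harg] at hmain
  rw [← ge_cast] at hmain
  rw [pco_last, hgeμC] at hmain
  have hrhs : (∏ j, (((t : ℝ) : ℂ) - ρl j)) = (((∏ j, (t - (ρl j).re) : ℝ) : ℂ)) := by
    push_cast
    refine Finset.prod_congr rfl fun j _ => ?_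
    conv_lhs => rw [hρlre j]
  rw [hrhs] at hmain
  have : ((ge n k (fun i => x i + t * μ i) : ℝ) : ℂ)
      = (((ge n k μ * ∏ j, (t - (ρl j).re) : ℝ) : ℂ)) := by
    rw [hmain]
    push_cast
    ring
  exact_mod_cast this

end Gd

namespace Gd

open Filter Topology Complex

variable {n k : ℕ}

theorem pev_cast {k : ℕ} (f : Fin (k + 1) → ℝ) (t : ℝ) :
    pev (fun i => ((f i : ℝ) : ℂ)) ((t : ℝ) : ℂ) = ((pev f t : ℝ) : ℂ) := by
  rw [pev, pev]
  push_cast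
  ring

/-- additivity: `σ_k > 0` on sums of cone elements -/
theorem add_pos (hk1 : 1 ≤ k) (hkn : k ≤ n) (x y : Fin n → ℝ)
    (hx : Cone n k x) (hy : Cone n k y) :
    0 < ge n k (fun i => x i + y i) := by
  classical
  have hk0 : 0 < k := hk1
  have hgey : 0 < ge n k y := hy k hk1 le_rfl
  set xu : ℝ → Fin n → ℝ := fun u i => (1 - u) + u * x i with hxu
  choose r hr using fun u => hyperb hk1 hkn (xu u) y hy
  set f : ℝ → Fin (k + 1) → ℝ := fun u => pco n k (xu u) y with hf
  set c : ℝ → Fin (k + 1) → ℂ := fun u i => ((f u i : ℝ) : ℂ) with hcdef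
  have hpevf : ∀ u t, pev (f u) t = ge n k y * ∏ j, (t - r u j) := by
    intro u t
    rw [hf]
    rw [pev_pco]
    exact hr u t
  have hfacC : ∀ u (w : ℂ), pev (c u) w = ((ge n k y : ℝ) : ℂ) * ∏ j, (w - ((r u j : ℝ) : ℂ)) :=
    fun u => lift_factor (f u) (ge n k y) (r u) (hpevf u)
  have hflast : ∀ u, f u (Fin.last k) = ge n k y := fun u => pco_last n k (xu u) y
  have hclast : ∀ u, c u (Fin.last k) = ((ge n k y : ℝ) : ℂ) := by
    intro u
    rw [hcdef]
    simp only [hflast u]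
  have hlead : ∀ u ∈ Set.Icc (0 : ℝ) 1, c u (Fin.last k) ≠ 0 := by
    intro u _
    rw [hclast u]
    exact_mod_cast hgey.ne'
  -- roots are real, equal to some r u j
  have hrootreal : ∀ u, ∀ z : ℂ, pev (c u) z = 0 → ∃ j, z = ((r u j : ℝ) : ℂ) := by
    intro u z hz
    refine root_eq_of_factor (L := ((ge n k y : ℝ) : ℂ)) ?_ (hfacC u) hz
    exact_mod_cast hgey.ne'
  -- value at a real point
  have hreal : ∀ u (t : ℝ), pev (c u) ((t : ℝ) : ℂ) = ((ge n k (fun i => xu u i + t * y i) : ℝ) : ℂ) := by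
    intro u t
    rw [hcdef]
    rw [pev_cast, hpevf u t, ← hr u t]
  -- continuity
  have hc : ∀ i, Continuous fun u => c u i := by
    intro i
    rw [hcdef]
    apply Complex.continuous_ofReal.comp
    rw [hf]
    apply continuous_finset_sum
    intro S _
    apply continuous_finset_sum
    intro A _
    apply Continuous.mul continuous_const
    apply continuous_finset_prod
    intro j _
    rw [hxu]
    continuity
  -- no roots with zero real part
  have hnr : ∀ u ∈ Set.Icc (0 : ℝ) 1, ∀ z, pev (c u) z = 0 → -z.re ≠ 0 := by
    intro u hu z hz h0
    obtain ⟨j, rfl⟩ := hrootreal u z hz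
    have hrj : r u j = 0 := by simpa using h0
    rw [hrj] at hz
    have := hreal u 0
    rw [show (((0 : ℝ) : ℝ) : ℂ) = ((0 : ℝ) : ℂ) from rfl] at this
    rw [this] at hz
    have harg : (fun i => xu u i + 0 * y i) = fun i => (1 - u) + u * x i := by
      funext i; rw [hxu]; ring
    rw [harg] at hz
    have hzero : ge n k (fun i => (1 - u) + u * x i) = 0 := by exact_mod_cast hz
    have hpos := ge_star_pos hk1 hkn hx hu.1 hu.2
    linarith
  -- base case
  have hbase : ∀ z, pev (c 0) z = 0 → 0 < -z.re := by
    intro z hz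
    obtain ⟨j, rfl⟩ := hrootreal 0 z hz
    simp only [Complex.ofReal_re, neg_pos]
    by_contra hcon
    push_neg at hcon
    have := hreal 0 (r 0 j)
    rw [hz] at this
    have harg : (fun i => xu 0 i + r 0 j * y i) = fun i => 1 + r 0 j * y i := by
      funext i; rw [hxu]; ring
    rw [harg] at this
    have hzero : ge n k (fun i => 1 + r 0 j * y i) = 0 := by exact_mod_cast this.symm
    have hpos := ge_one_add_smul_pos hk1 hkn hy hcon
    linarith
  have hfinal := pers hk0 (fun z => -z.re) (by continuity) c hc hlead hnr hbase
  -- conclude: all roots at u = 1 are negative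
  have hrneg : ∀ j, r 1 j < 0 := by
    intro j
    have hroot : pev (c 1) ((r 1 j : ℝ) : ℂ) = 0 := by
      rw [hfacC 1,
        Finset.prod_eq_zero (Finset.mem_univ j) (sub_self (((r 1 j : ℝ) : ℂ))), mul_zero]
    have := hfinal _ hroot
    simpa using this
  have hval : ge n k (fun i => x i + y i) = ge n k y * ∏ j, (1 - r 1 j) := by
    have h1 := hr 1 1
    have harg : (fun i => xu 1 i + 1 * y i) = fun i => x i + y i := by
      funext i; rw [hxu]; ring
    rw [harg] at h1
    exact h1
  rw [hval]
  apply mul_pos hgey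
  apply Finset.prod_pos
  intro j _
  have := hrneg j
  linarith

end Gd

namespace Gd

variable {n k : ℕ}

theorem cone_convex_combo (hk1 : 1 ≤ k) (hkn : k ≤ n) {x y : Fin n → ℝ}
    (hx : Cone n k x) (hy : Cone n k y) {a b : ℝ}
    (ha : 0 ≤ a) (hb : 0 ≤ b) (hab : a + b = 1) :
    Cone n k (fun i => a * x i + b * y i) := by
  intro j hj1 hjk
  have hjn : j ≤ n := le_trans hjk hkn
  rcases eq_or_lt_of_le ha with ha0 | ha0
  · have hb1 : b = 1 := by linarith
    have : (fun i => a * x i + b * y i) = y := by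
      funext i; rw [← ha0, hb1]; ring
    rw [this]
    exact hy j hj1 hjk
  rcases eq_or_lt_of_le hb with hb0 | hb0
  · have ha1 : a = 1 := by linarith
    have : (fun i => a * x i + b * y i) = x := by
      funext i; rw [← hb0, ha1]; ring
    rw [this]
    exact hx j hj1 hjk
  · exact add_pos hj1 hjn (fun i => a * x i) (fun i => b * y i)
      (cone_smul (cone_anti hx hjk) ha0) (cone_smul (cone_anti hy hjk) hb0)

/-- The key log-concavity inequality along segments. -/
theorem log_concave_ineq (hk1 : 1 ≤ k) (hkn : k ≤ n) {x y : Fin n → ℝ}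
    (hx : Cone n k x) (hy : Cone n k y) {a b : ℝ}
    (ha : 0 ≤ a) (hb : 0 ≤ b) (hab : a + b = 1) :
    a * Real.log (ge n k x) + b * Real.log (ge n k y) ≤
      Real.log (ge n k (fun i => a * x i + b * y i)) := by
  classical
  set d : Fin n → ℝ := fun i => y i - x i with hd
  obtain ⟨r, hr⟩ := hyperb hk1 hkn d x hx
  -- the segment identity
  have hident : ∀ s : ℝ, 0 ≤ s → ge n k (fun i => x i + s * d i)
      = ge n k x * ∏ j, (1 - s * r j) := by
    intro s hs
    rcases eq_or_lt_of_le hs with hs0 | hs0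
    · have h1 : (fun i => x i + s * d i) = x := by funext i; rw [← hs0]; ring
      have h2 : ∀ j : Fin k, 1 - s * r j = 1 := fun j => by rw [← hs0]; ring
      rw [h1, Finset.prod_congr rfl (fun j _ => h2 j), Finset.prod_const_one, mul_one]
    · have h1 : (fun i => x i + s * d i) = fun i => s * (d i + s⁻¹ * x i) := by
        funext i
        field_simp
        ring
      rw [h1, ge_smul]
      have h2 : (fun i => d i + s⁻¹ * x i) = fun i => d i + s⁻¹ * x i := rfl
      rw [hr s⁻¹]
      have h3 : s ^ k = ∏ _j : Fin k, s := by
        rw [Finset.prod_const, Finset.card_univ, Fintype.card_fin]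
      rw [mul_comm (s ^ k), mul_assoc, h3, ← Finset.prod_mul_distrib]
      congr 1
      refine Finset.prod_congr rfl fun j _ => ?_
      field_simp
  -- positivity along the segment
  have hpos : ∀ s : ℝ, 0 ≤ s → s ≤ 1 → 0 < ge n k (fun i => x i + s * d i) := by
    intro s hs0 hs1
    have harg : (fun i => x i + s * d i) = fun i => (1 - s) * x i + s * y i := by
      funext i; rw [hd]; ring
    rw [harg]
    exact cone_convex_combo hk1 hkn hx hy (by linarith) hs0 (by ring) k hk1 le_rfl
  -- factor positivity
  have hfactor : ∀ (j : Fin k) (s : ℝ), 0 ≤ s → s ≤ 1 → 0 < 1 - s * r j := by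
    intro j s hs0 hs1
    by_contra hcon
    push_neg at hcon
    have hrj : 0 < r j := by nlinarith
    have hs0' : 0 < s := by nlinarith
    set s1 := (r j)⁻¹ with hs1def
    have hs1pos : 0 < s1 := by positivity
    have hs1le : s1 ≤ s := by
      rw [hs1def, inv_le_iff_one_le_mul₀ hrj]
      nlinarith
    have hval := hpos s1 hs1pos.le (hs1le.trans hs1)
    rw [hident s1 hs1pos.le] at hval
    have hzero : 1 - s1 * r j = 0 := by
      rw [hs1def]
      field_simp
      ring
    rw [Finset.prod_eq_zero (Finset.mem_univ j) hzero, mul_zero] at hval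
    exact lt_irrefl 0 hval
  have hgx : 0 < ge n k x := hx k hk1 le_rfl
  have hgy : 0 < ge n k y := hy k hk1 le_rfl
  have hb1 : b ≤ 1 := by linarith
  -- log of the values
  have hlog_b : Real.log (ge n k (fun i => x i + b * d i))
      = Real.log (ge n k x) + ∑ j, Real.log (1 - b * r j) := by
    rw [hident b hb, Real.log_mul hgx.ne' ?h1, Real.log_prod]
    · intro j _
      exact (hfactor j b hb hb1).ne'
    · exact (Finset.prod_pos fun j _ => hfactor j b hb hb1).ne'
  have hlog_y : Real.log (ge n k y) = Real.log (ge n k x) + ∑ j, Real.log (1 - 1 * r j) := by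
    have h1 : (fun i => x i + 1 * d i) = y := by funext i; rw [hd]; ring
    rw [← h1, hident 1 zero_le_one, Real.log_mul hgx.ne' ?h2, Real.log_prod]
    · intro j _
      exact (hfactor j 1 zero_le_one le_rfl).ne'
    · exact (Finset.prod_pos fun j _ => hfactor j 1 zero_le_one le_rfl).ne'
  -- jensen per factor
  have hjensen : ∀ j : Fin k, b * Real.log (1 - 1 * r j) ≤ Real.log (1 - b * r j) := by
    intro j
    have hcc := strictConcaveOn_log_Ioi.concaveOn
    have h1mem : (1 : ℝ) ∈ Set.Ioi (0 : ℝ) := by norm_num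
    have h2mem : (1 - 1 * r j : ℝ) ∈ Set.Ioi (0 : ℝ) := hfactor j 1 zero_le_one le_rfl
    have := hcc.2 h1mem h2mem ha hb hab
    simp only [smul_eq_mul, Real.log_one, mul_zero, zero_add] at this
    have harg : a * 1 + b * (1 - 1 * r j) = 1 - b * r j := by linarith [hab]
    rwa [harg] at this
  -- conclusion
  have harg2 : (fun i => a * x i + b * y i) = fun i => x i + b * d i := by
    funext i
    rw [hd]
    have : a = 1 - b := by linarith
    rw [this]
    ring
  rw [harg2, hlog_b, hlog_y]
  have hsum : b * ∑ j, Real.log (1 - 1 * r j) ≤ ∑ j, Real.log (1 - b * r j) := by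
    rw [Finset.mul_sum]
    exact Finset.sum_le_sum fun j _ => hjensen j
  have hL : a * Real.log (ge n k x) + b * Real.log (ge n k x) = Real.log (ge n k x) := by
    rw [← add_mul, hab, one_mul]
  nlinarith [hsum, hL]

end Gd

theorem esymm_eq_ge (n j : ℕ) (μ : Fin n → ℝ) : esymm n j μ = Gd.ge n j μ := rfl

theorem mem_cone_iff (n k : ℕ) (μ : Fin n → ℝ) :
    μ ∈ GardingCone n k ↔ Gd.Cone n k μ := Iff.rfl

/-- For `1 ≤ k ≤ n`, the function `μ ↦ log σ_k(μ)` is concave on the Gårding cone `Γ_k`. -/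
theorem stmt_11 (n k : ℕ) (hk1 : 1 ≤ k) (hkn : k ≤ n) :
    ConcaveOn ℝ (GardingCone n k) (fun μ => Real.log (esymm n k μ)) := by
  constructor
  · intro x hx y hy a b ha hb hab
    rw [mem_cone_iff] at hx hy ⊢
    have := Gd.cone_convex_combo hk1 hkn hx hy ha hb hab
    have harg : (fun i => a * x i + b * y i) = a • x + b • y := by
      funext i
      simp [smul_eq_mul]
    rwa [harg] at this
  · intro x hx y hy a b ha hb hab
    rw [mem_cone_iff] at hx hy
    simp only [smul_eq_mul, esymm_eq_ge]
    have := Gd.log_concave_ineq hk1 hkn hx hy ha hb hab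
    have harg : (fun i => a * x i + b * y i) = a • x + b • y := by
      funext i
      simp [smul_eq_mul]
    rwa [harg] at this
end
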